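/- arXiv:2403.04495 — 9 statements merged into one kernel-verified Lean document; each statement's English description precedes it below -/
import Mathlib

section
/- Let M = (m_i)_{i=0}^∞ be a sequence of integers with m_0 = 1 and m_i ≥ 2 for all i ≥ 1. Then for every pair of positive integers n and r, the number p_M(m_1 m_2 ⋯ m_r n − 1) is divisible by ∏_{t=2}^{r} 𝓜(m_t, t−1), where the empty product (for r = 1) is 1. -/
/-- `pM m n` = number of partitions of `n` into parts of the form `m 0 * m 1 * ⋯ * m r`. -/
noncomputable def pM (m : ℕ → ℕ) (n : ℕ) : ℕ :=
  Nat.card {p : n.Partition // ∀ j ∈ p.parts, ∃ r : ℕ, j = ∏ i ∈ Finset.range (r + 1), m i}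

/-- `𝓜(m,r) = m / gcd(m, lcm(1,…,r))`. -/
def Mcal (m r : ℕ) : ℕ := m / Nat.gcd m ((Finset.Icc 1 r).lcm id)

/-!
Write `T_k = m_{k+1} ⋯ m_r n` and let `q_k(S)` count the partitions of `S` into parts
`m_{k+1} ⋯ m_{k+i}` (`i ≥ 0`), so that `p_M = q_0`. Removing the parts equal to `1` gives
`q_k(S) = ∑_{j ≤ S / m_{k+1}} q_{k+1}(j)`, and iterating this yields
`p_M(T_0 - 1) = ∑_{S < T_{k+1}} q_{k+1}(S) w_k(T_{k+1} - S)`, where `w_0 = 1` and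
`w_{k+1}(y) = ∑_{x < m_{k+2} y} w_k(x + 1)`.

Each `w_k` is a polynomial of degree `k`, and `w_{k+1}(y) = F(m_{k+2} y)` where `F` has degree
`k + 1` and `F(0) = 0`. In the Newton expansion `F(z) = ∑_e Δ^e F(0) binom(z, e)` the coefficients
are integer combinations of values of `F`, while `𝓜(m, k + 1)` divides `binom(m y, e)` for
`1 ≤ e ≤ k + 1` because `m y ∣ e binom(m y, e)`. By induction `∏_{t=2}^{k+1} 𝓜(m_t, t-1)` divides
every value of `w_k`; take `k = r - 1`.

Here `q_k` is `partitionCount (tailProducts m k)` and `w_k` is `weight m k`.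
-/

open Finset

local notation "Δ" => fwdDiff (1 : ℕ)

section FwdDiff

variable {G : Type*} [AddCommGroup G]

lemma fwdDiff_iter_eq_zero_of_le {f : ℕ → G} {K i : ℕ} (h : Δ^[K] f = 0) (hKi : K ≤ i) :
    Δ^[i] f = 0 := by
  obtain ⟨j, rfl⟩ := Nat.exists_eq_add_of_le hKi
  rw [add_comm, Function.iterate_add_apply, h]
  clear hKi
  induction j with
  | zero => rfl
  | succ j ih => rw [Function.iterate_succ_apply', ih]; exact fwdDiff_const 1 0

lemma fwdDiff_iter_comp_mul_eq_zero {f : ℕ → G} {K : ℕ} (h : Δ^[K] f = 0) (m : ℕ) :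
    Δ^[K] (fun x => f (m * x)) = 0 := by
  induction K generalizing f with
  | zero => simp only [Function.iterate_zero, id_eq] at h ⊢; rw [h]; rfl
  | succ K ih =>
    have htel : Δ (fun x => f (m * x)) = ∑ u ∈ range m, fun x => Δ f (m * x + u) := by
      ext x
      simp only [fwdDiff, Finset.sum_apply, mul_add_one, add_assoc]
      exact (sum_range_sub (fun u => f (m * x + u)) m).symm
    rw [Function.iterate_succ_apply, htel, fwdDiff_iter_finsetSum]
    refine sum_eq_zero fun u _ => ih (f := fun y => Δ f (y + u)) ?_
    ext y
    rw [fwdDiff_iter_comp_add, ← Function.iterate_succ_apply, h]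
    rfl

lemma fwdDiff_sum_range (g : ℕ → G) : Δ (fun z => ∑ x ∈ range z, g x) = g := by
  ext z
  simp [fwdDiff, sum_range_succ]

lemma fwdDiff_iter_sum_range_succ_eq_zero {g : ℕ → G} {K : ℕ} (h : Δ^[K] g = 0) :
    Δ^[K + 1] (fun z => ∑ x ∈ range z, g (x + 1)) = 0 := by
  rw [Function.iterate_succ_apply, fwdDiff_sum_range]
  ext y
  rw [fwdDiff_iter_comp_add, h]
  rfl

lemma eq_sum_range_choose_smul_fwdDiff_iter {f : ℕ → G} {K : ℕ} (h : Δ^[K] f = 0) (x : ℕ) :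
    f x = ∑ e ∈ range K, x.choose e • Δ^[e] f 0 := by
  have hnewton := shift_eq_sum_fwdDiff_iter 1 f x 0
  rw [zero_add, smul_eq_mul, mul_one] at hnewton
  rw [hnewton, sum_subset (range_subset_range.mpr (le_max_left (x + 1) K)),
    ← sum_subset (range_subset_range.mpr (le_max_right (x + 1) K))]
  · intro e _ he
    rw [fwdDiff_iter_eq_zero_of_le h (by simpa using he), Pi.zero_apply, smul_zero]
  · intro e _ he
    rw [Nat.choose_eq_zero_of_lt (by simpa using he), zero_smul]

end FwdDiff

lemma mul_dvd_of_fwdDiff_iter_eq_zero {R : Type*} [CommRing R] {f : ℕ → R} {K : ℕ}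
    (h : Δ^[K] f = 0) (h0 : f 0 = 0) {d d' : R} (hd : ∀ x, d ∣ f x) {y : ℕ}
    (hy : ∀ e, 0 < e → e < K → d' ∣ (y.choose e : R)) :
    d * d' ∣ f y := by
  rw [eq_sum_range_choose_smul_fwdDiff_iter h y]
  refine dvd_sum fun e he => ?_
  rw [nsmul_eq_mul, mul_comm (y.choose e : R)]
  rcases Nat.eq_zero_or_pos e with rfl | hpos
  · simp [h0]
  · refine mul_dvd_mul ?_ (hy e hpos (mem_range.mp he))
    rw [fwdDiff_iter_eq_sum_shift]
    exact dvd_sum fun i _ => by rw [zsmul_eq_mul]; exact (hd _).mul_left _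

lemma Mcal_dvd_iff {m k x : ℕ} : Mcal m k ∣ x ↔ m ∣ (Icc 1 k).lcm id * x := by
  have hL : (Icc 1 k).lcm id ≠ 0 := by simp [Finset.lcm_eq_zero_iff]
  rw [Mcal, Nat.div_dvd_iff_dvd_mul (Nat.gcd_dvd_left _ _)
    (Nat.gcd_pos_of_pos_right _ (Nat.pos_of_ne_zero hL)), Nat.dvd_gcd_mul_iff_dvd_mul]

lemma dvd_mul_choose (n : ℕ) {e : ℕ} (he : 0 < e) : n ∣ e * n.choose e := by
  obtain ⟨e, rfl⟩ := Nat.exists_eq_add_one_of_ne_zero he.ne'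
  cases n with
  | zero => simp
  | succ n => exact ⟨n.choose e, by rw [mul_comm, ← Nat.add_one_mul_choose_eq]⟩

lemma Mcal_dvd_choose_mul (m j : ℕ) {e k : ℕ} (he : 0 < e) (hek : e ≤ k) :
    Mcal m k ∣ (m * j).choose e := by
  have hel : e ∣ (Icc 1 k).lcm id := dvd_lcm (mem_Icc.mpr ⟨he, hek⟩)
  exact Mcal_dvd_iff.mpr <|
    (dvd_mul_right m j).trans ((dvd_mul_choose _ he).trans (mul_dvd_mul_right hel _))

def weight (m : ℕ → ℕ) : ℕ → ℕ → ℤ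
  | 0 => fun _ => 1
  | k + 1 => fun y => ∑ x ∈ range (m (k + 2) * y), weight m k (x + 1)

lemma fwdDiff_iter_weight (m : ℕ → ℕ) (k : ℕ) : Δ^[k + 1] (weight m k) = 0 := by
  induction k with
  | zero => exact fwdDiff_const 1 1
  | succ k ih => exact fwdDiff_iter_comp_mul_eq_zero (fwdDiff_iter_sum_range_succ_eq_zero ih) _

lemma weight_dvd (m : ℕ → ℕ) (k y : ℕ) :
    ((∏ t ∈ Icc 2 (k + 1), Mcal (m t) (t - 1) : ℕ) : ℤ) ∣ weight m k y := by
  induction k generalizing y with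
  | zero => simp
  | succ k ih =>
    rw [prod_Icc_succ_top (by omega), Nat.cast_mul, Nat.add_sub_cancel]
    exact mul_dvd_of_fwdDiff_iter_eq_zero
      (fwdDiff_iter_sum_range_succ_eq_zero (fwdDiff_iter_weight m k)) (sum_range_zero _)
      (fun z => dvd_sum fun x _ => ih (x + 1))
      fun e he hek => Int.natCast_dvd_natCast.mpr (Mcal_dvd_choose_mul _ _ he (by omega))

noncomputable def partitionCount (A : Set ℕ) (N : ℕ) : ℕ :=
  Nat.card {p : N.Partition // ∀ i ∈ p.parts, i ∈ A}

lemma Multiset.map_mul_map_div {m : ℕ} {s : Multiset ℕ} (h : ∀ a ∈ s, m ∣ a) :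
    (s.map (· / m)).map (m * ·) = s := by
  rw [Multiset.map_map]
  conv_rhs => rw [← Multiset.map_id s]
  exact Multiset.map_congr rfl fun a ha => Nat.mul_div_cancel' (h a ha)

def reducedParts {N : ℕ} (m : ℕ) (p : N.Partition) : Multiset ℕ :=
  (p.parts.filter (· ≠ 1)).map (· / m)

section ReducedParts

variable {A : Set ℕ} {m N : ℕ}

variable (p : {p : N.Partition // ∀ i ∈ p.parts, i ∈ insert 1 ((m * ·) '' A)})

lemma mem_reducedParts (hm : 0 < m) : ∀ i ∈ reducedParts m p.1, 0 < i ∧ i ∈ A := by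
  intro i hi
  obtain ⟨a, ha, rfl⟩ := Multiset.mem_map.mp hi
  obtain ⟨ha, ha1⟩ := Multiset.mem_filter.mp ha
  obtain ⟨b, hb, rfl⟩ := (p.2 _ ha).resolve_left ha1
  rw [Nat.mul_div_cancel_left _ hm]
  exact ⟨Nat.pos_of_mul_pos_left (p.1.parts_pos ha), hb⟩

lemma parts_eq_replicate_add_map_reducedParts :
    p.1.parts = Multiset.replicate (p.1.parts.count 1) 1 + (reducedParts m p.1).map (m * ·) := by
  rw [reducedParts, Multiset.map_mul_map_div, ← Multiset.filter_eq', Multiset.filter_add_not]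
  intro a ha
  obtain ⟨ha, ha1⟩ := Multiset.mem_filter.mp ha
  obtain ⟨b, -, rfl⟩ := (p.2 _ ha).resolve_left ha1
  exact dvd_mul_right m b

lemma count_one_add_mul_sum_reducedParts :
    p.1.parts.count 1 + m * (reducedParts m p.1).sum = N := by
  conv_rhs => rw [← p.1.parts_sum, parts_eq_replicate_add_map_reducedParts p]
  rw [Multiset.sum_add, Multiset.sum_replicate, smul_eq_mul, mul_one, Multiset.sum_map_mul_left,
    Multiset.map_id']

lemma reducedParts_eq_of_parts_eq (hm : 2 ≤ m) {p : N.Partition} {c : ℕ} {s : Multiset ℕ}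
    (hp : p.parts = Multiset.replicate c 1 + s.map (m * ·)) : reducedParts m p = s := by
  have hne : ∀ b, m * b ≠ 1 := fun b h => by
    have := Nat.eq_one_of_mul_eq_one_right h
    omega
  rw [reducedParts, hp, Multiset.filter_add,
    Multiset.filter_eq_nil.mpr fun a ha => not_not.mpr (Multiset.eq_of_mem_replicate ha),
    Multiset.filter_eq_self.mpr fun a ha => by
      obtain ⟨b, -, rfl⟩ := Multiset.mem_map.mp ha
      exact hne b,
    zero_add, Multiset.map_map]
  conv_rhs => rw [← Multiset.map_id s]
  exact Multiset.map_congr rfl fun b _ => Nat.mul_div_cancel_left b (by omega)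

end ReducedParts

noncomputable def reducedPartsEquiv {A : Set ℕ} {m N : ℕ} (hm : 2 ≤ m) (j : ℕ)
    (hj : m * j ≤ N) :
    {p : {p : N.Partition // ∀ i ∈ p.parts, i ∈ insert 1 ((m * ·) '' A)} //
      (reducedParts m p.1).sum = j} ≃ {p : j.Partition // ∀ i ∈ p.parts, i ∈ A} where
  toFun p := ⟨⟨reducedParts m p.1.1, fun hi => (mem_reducedParts p.1 (by omega) _ hi).1, p.2⟩,
    fun i hi => (mem_reducedParts p.1 (by omega) i hi).2⟩
  invFun q :=
    have hparts : ∀ i ∈ Multiset.replicate (N - m * j) 1 + q.1.parts.map (m * ·),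
        i = 1 ∨ ∃ b ∈ q.1.parts, m * b = i := fun i hi => by
      rcases Multiset.mem_add.mp hi with h | h
      · exact Or.inl (Multiset.eq_of_mem_replicate h)
      · exact Or.inr (Multiset.mem_map.mp h)
    ⟨⟨⟨Multiset.replicate (N - m * j) 1 + q.1.parts.map (m * ·),
      fun {i} hi => by
        rcases hparts i hi with rfl | ⟨b, hb, rfl⟩
        · exact one_pos
        · exact Nat.mul_pos (by omega) (q.1.parts_pos hb),
      by
        rw [Multiset.sum_add, Multiset.sum_replicate, smul_eq_mul, mul_one,
          Multiset.sum_map_mul_left, Multiset.map_id', q.1.parts_sum]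
        omega⟩,
      fun i hi => (hparts i hi).imp_right fun ⟨b, hb, hbi⟩ => ⟨b, q.2 b hb, hbi⟩⟩,
      by rw [reducedParts_eq_of_parts_eq hm rfl, q.1.parts_sum]⟩
  left_inv p := by
    have hcount := count_one_add_mul_sum_reducedParts p.1
    rw [p.2] at hcount
    refine Subtype.ext (Subtype.ext (Nat.Partition.ext ?_))
    dsimp only
    conv_rhs => rw [parts_eq_replicate_add_map_reducedParts p.1]
    congr 2
    omega
  right_inv q := Subtype.ext (Nat.Partition.ext (reducedParts_eq_of_parts_eq hm rfl))

theorem partitionCount_insert_one_image_mul (A : Set ℕ) {m : ℕ} (hm : 2 ≤ m) (N : ℕ) :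
    partitionCount (insert 1 ((m * ·) '' A)) N =
      ∑ j ∈ range (N / m + 1), partitionCount A j := by
  let level (p : {p : N.Partition // ∀ i ∈ p.parts, i ∈ insert 1 ((m * ·) '' A)}) :
      Fin (N / m + 1) :=
    ⟨(reducedParts m p.1).sum, Nat.lt_succ_of_le <| (Nat.le_div_iff_mul_le (by omega)).mpr <| by
      have := count_one_add_mul_sum_reducedParts p
      rw [mul_comm]
      omega⟩
  rw [← Fin.sum_univ_eq_sum_range, partitionCount,
    ← Nat.card_congr (Equiv.sigmaFiberEquiv level), Nat.card_sigma]
  refine sum_congr rfl fun j _ => Nat.card_congr ?_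
  refine (Equiv.subtypeEquivRight fun p => ?_).trans
    (reducedPartsEquiv hm j
      ((Nat.mul_le_mul_left m (Nat.lt_succ_iff.mp j.2)).trans (Nat.mul_div_le N m)))
  simp [level, Fin.ext_iff]

/-- The set `{M_{k+r} / M_k | r ≥ 0}`. -/
def tailProducts (m : ℕ → ℕ) (k : ℕ) : Set ℕ :=
  Set.range fun r => ∏ i ∈ range r, m (k + 1 + i)

lemma tailProducts_eq_insert (m : ℕ → ℕ) (k : ℕ) :
    tailProducts m k = insert 1 ((m (k + 1) * ·) '' tailProducts m (k + 1)) := by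
  have hsucc (r : ℕ) :
      ∏ i ∈ range (r + 1), m (k + 1 + i) = m (k + 1) * ∏ i ∈ range r, m (k + 1 + 1 + i) := by
    rw [prod_range_succ', mul_comm]
    simp only [add_zero, add_assoc, add_comm 1]
  ext x
  constructor
  · rintro ⟨_ | r, rfl⟩
    · exact Or.inl (prod_range_zero _)
    · exact Or.inr ⟨_, ⟨r, rfl⟩, (hsucc r).symm⟩
  · rintro (rfl | ⟨_, ⟨r, rfl⟩, rfl⟩)
    · exact ⟨0, prod_range_zero _⟩
    · exact ⟨r + 1, hsucc r⟩

lemma pM_eq_partitionCount {m : ℕ → ℕ} (hm0 : m 0 = 1) (N : ℕ) :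
    pM m N = partitionCount (tailProducts m 0) N := by
  have hprod (r : ℕ) : ∏ i ∈ range (r + 1), m i = ∏ i ∈ range r, m (0 + 1 + i) := by
    rw [prod_range_succ', hm0, mul_one]
    simp only [zero_add, add_comm 1]
  unfold pM partitionCount tailProducts
  simp only [hprod, Set.mem_range, eq_comm]

lemma sum_range_mul_sum_range_div {R : Type*} [Semiring R] (q V : ℕ → R) {m : ℕ} (hm : 0 < m)
    (T : ℕ) :
    ∑ S ∈ range (m * T), (∑ j ∈ range (S / m + 1), q j) * V (m * T - S)
      = ∑ j ∈ range T, q j * ∑ x ∈ range (m * (T - j)), V (x + 1) := by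
  simp_rw [sum_mul, mul_sum]
  rw [sum_comm' (t' := range T) (s' := fun j => Ico (m * j) (m * T))]
  · refine sum_congr rfl fun j hj => ?_
    rw [sum_Ico_eq_sum_range, ← sum_range_reflect, Nat.mul_sub]
    refine sum_congr rfl fun x hx => ?_
    have := mem_range.mp hx
    congr 2
    omega
  · intro S j
    simp only [mem_range, mem_Ico, Nat.lt_succ_iff, Nat.le_div_iff_mul_le hm]
    constructor
    · rintro ⟨hS, hjS⟩
      exact ⟨⟨by linarith, hS⟩, Nat.lt_of_mul_lt_mul_left (by linarith : m * j < m * T)⟩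
    · rintro ⟨⟨hjS, hS⟩, -⟩
      exact ⟨hS, by linarith⟩

lemma sum_partitionCount_mul_weight_succ {m : ℕ → ℕ} {k : ℕ} (hm : 2 ≤ m (k + 2)) (T : ℕ) :
    ∑ S ∈ range (m (k + 2) * T),
        (partitionCount (tailProducts m (k + 1)) S : ℤ) * weight m k (m (k + 2) * T - S)
      = ∑ S ∈ range T,
          (partitionCount (tailProducts m (k + 2)) S : ℤ) * weight m (k + 1) (T - S) := by
  simp_rw [tailProducts_eq_insert m (k + 1),
    partitionCount_insert_one_image_mul _ hm, Nat.cast_sum]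
  exact sum_range_mul_sum_range_div _ _ (by omega) T

lemma pM_prod_mul_sub_one_eq_sum {m : ℕ → ℕ} (hm0 : m 0 = 1) (hm : ∀ i, 1 ≤ i → 2 ≤ m i)
    (k : ℕ) {T : ℕ} (hT : 0 < T) :
    (pM m ((∏ t ∈ Icc 1 (k + 1), m t) * T - 1) : ℤ)
      = ∑ S ∈ range T,
          (partitionCount (tailProducts m (k + 1)) S : ℤ) * weight m k (T - S) := by
  induction k generalizing T with
  | zero =>
    obtain ⟨T, rfl⟩ := Nat.exists_eq_add_one_of_ne_zero hT.ne'
    have hm1 := hm 1 le_rfl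
    have hdiv : (m 1 * (T + 1) - 1) / m 1 = T := by
      rw [mul_add_one, Nat.add_sub_assoc (by omega), Nat.mul_add_div (by omega),
        Nat.div_eq_of_lt (by omega), add_zero]
    rw [Icc_self, prod_singleton, pM_eq_partitionCount hm0, tailProducts_eq_insert,
      partitionCount_insert_one_image_mul _ hm1, hdiv]
    simp [weight]
  | succ k ih =>
    have hmk := hm (k + 2) (by omega)
    rw [prod_Icc_succ_top (by omega), mul_assoc, ih (Nat.mul_pos (by positivity) hT),
      sum_partitionCount_mul_weight_succ hmk]

/-- **Main theorem.** For a sequence `M = (mᵢ)` with `m₀ = 1` and `mᵢ ≥ 2` for `i ≥ 1`,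
for all positive integers `n` and `r`, the product `∏_{t=2}^{r} 𝓜(m_t, t-1)` divides
`p_M(m₁ m₂ ⋯ m_r n - 1)`. -/
theorem pM_congruence (m : ℕ → ℕ) (hm0 : m 0 = 1) (hm : ∀ i, 1 ≤ i → 2 ≤ m i)
    (n r : ℕ) (hn : 1 ≤ n) (hr : 1 ≤ r) :
    (∏ t ∈ Finset.Icc 2 r, Mcal (m t) (t - 1)) ∣
      pM m ((∏ t ∈ Finset.Icc 1 r, m t) * n - 1) := by
  obtain ⟨k, rfl⟩ := Nat.exists_eq_add_of_le' hr
  have hsum := pM_prod_mul_sub_one_eq_sum hm0 hm k hn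
  rw [← Int.natCast_dvd_natCast, hsum]
  exact dvd_sum fun S _ => (weight_dvd m k _).mul_left _
end

section
/- Let M = (m_i)_{i=0}^∞ be a sequence of integers with m_0 = 1 and m_i ≥ 2 for all i ≥ 1. Then for every positive integer n, the number p_M(m_1 m_2 m_3 n − 1) is divisible by m_2 · (m_3 / gcd(m_3, 2)). (This is the case r = 3 of the main theorem, settling the conjecture of Folsom–Homma–Ryu–Tong in this case with σ = 0.) -/
open Finset

lemma Nat.mul_sub_one_div_add_one {k c : ℕ} (hk : 0 < k) (hc : 0 < c) :
    (k * c - 1) / k + 1 = c := by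
  obtain ⟨c, rfl⟩ : ∃ c', c = c' + 1 := ⟨c - 1, by omega⟩
  rw [show k * (c + 1) - 1 = k * c + (k - 1) by rw [Nat.mul_succ]; omega, Nat.mul_add_div hk,
    Nat.div_eq_of_lt (by omega : k - 1 < k)]

namespace Finset

lemma sum_range_mul_eq_sum_sum {M : Type*} [AddCommMonoid M] (f : ℕ → M) (b K : ℕ) :
    ∑ j ∈ range (b * K), f j = ∑ u ∈ range K, ∑ t ∈ range b, f (b * u + t) := by
  induction K with
  | zero => simp
  | succ K ih => rw [Nat.mul_succ, sum_range_add, ih, sum_range_succ]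

lemma sum_range_mul_comp_div {M : Type*} [AddCommMonoid M] (f : ℕ → M) {b : ℕ} (hb : 0 < b)
    (K : ℕ) : ∑ j ∈ range (b * K), f (j / b) = b • ∑ k ∈ range K, f k := by
  rw [sum_range_mul_eq_sum_sum, smul_sum]
  refine sum_congr rfl fun u _ => ?_
  rw [sum_congr rfl fun t ht => by
    rw [Nat.mul_add_div hb, Nat.div_eq_of_lt (mem_range.mp ht), add_zero], sum_const, card_range]

end Finset

lemma Nat.div_gcd_two_dvd_sum_range_succ (b : ℕ) : b / b.gcd 2 ∣ ∑ t ∈ range b, (t + 1) := by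
  have h := sum_range_id_mul_two (b + 1)
  rw [sum_range_succ', add_zero, Nat.add_sub_cancel] at h
  obtain ⟨c, rfl | rfl⟩ := Nat.even_or_odd' b
  · rw [show (2 * c).gcd 2 = 2 by simp, Nat.mul_div_cancel_left _ two_pos]
    exact ⟨2 * c + 1, by linarith⟩
  · rw [show (2 * c + 1).gcd 2 = 1 by simp, Nat.div_one]
    exact ⟨c + 1, by linarith⟩

lemma Nat.div_gcd_two_dvd_sum_range_sum_range (G : ℕ → ℕ) (b K : ℕ) :
    b / b.gcd 2 ∣ ∑ k ∈ range (b * K), ∑ l ∈ range (k + 1), G (l / b) := by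
  rcases b.eq_zero_or_pos with rfl | hb
  · simp
  have hblock : ∀ u, ∀ t < b,
      ∑ l ∈ range (b * u + t + 1), G (l / b) = b * ∑ v ∈ range u, G v + (t + 1) * G u := by
    intro u t ht
    rw [add_assoc, sum_range_add, sum_range_mul_comp_div G hb, smul_eq_mul,
      sum_const_nat (s := range (t + 1)) (m := G u) fun x hx => by
        rw [Nat.mul_add_div hb, Nat.div_eq_of_lt (by have := mem_range.mp hx; omega), add_zero],
      card_range]
  rw [sum_range_mul_eq_sum_sum]
  refine dvd_sum fun u _ => ?_
  rw [sum_congr rfl fun t ht => hblock u t (mem_range.mp ht), sum_add_distrib, sum_const,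
    card_range, smul_eq_mul, ← sum_mul]
  exact dvd_add (dvd_mul_of_dvd_left (Nat.div_dvd_of_dvd (Nat.gcd_dvd_left b 2)) _)
    (dvd_mul_of_dvd_left (div_gcd_two_dvd_sum_range_succ b) _)

namespace Multiset

lemma filter_ne_add_replicate_count {α : Type*} [DecidableEq α] (s : Multiset α) (a : α) :
    s.filter (· ≠ a) + replicate (s.count a) a = s := by
  rw [← filter_eq']
  conv_rhs => rw [← filter_add_not (· ≠ a) s]
  simp only [ne_eq, Decidable.not_not]

end Multiset

namespace Nat.Partition

def scalePad {j : ℕ} (q : j.Partition) {k : ℕ} (hk : 0 < k) {N : ℕ} (h : k * j ≤ N) :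
    N.Partition where
  parts := q.parts.map (k * ·) + Multiset.replicate (N - k * j) 1
  parts_pos hx := by
    rcases Multiset.mem_add.mp hx with hx | hx
    · obtain ⟨y, hy, rfl⟩ := Multiset.mem_map.mp hx
      exact Nat.mul_pos hk (q.parts_pos hy)
    · rw [Multiset.eq_of_mem_replicate hx]
      exact Nat.one_pos
  parts_sum := by
    rw [Multiset.sum_add, Multiset.sum_map_mul_left, Multiset.map_id', q.parts_sum,
      Multiset.sum_replicate, smul_eq_mul, mul_one]
    omega

lemma filter_ne_one_scalePad_parts {j : ℕ} (q : j.Partition) {k : ℕ} (hk : 1 < k) {N : ℕ}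
    (h : k * j ≤ N) :
    (q.scalePad (by omega) h).parts.filter (· ≠ 1) = q.parts.map (k * ·) := by
  rw [scalePad, Multiset.filter_add, Multiset.filter_eq_self.mpr, Multiset.filter_eq_nil.mpr,
    add_zero]
  · intro x hx
    simp [Multiset.eq_of_mem_replicate hx]
  · intro x hx
    obtain ⟨y, hy, rfl⟩ := Multiset.mem_map.mp hx
    have := q.parts_pos hy
    nlinarith

end Nat.Partition

namespace MAry

def IsPart (m : ℕ → ℕ) (j : ℕ) : Prop := ∃ r : ℕ, j = ∏ i ∈ range (r + 1), m i

/-- The parts of `shift m` are the parts `M_{r+1} / m 1` of `m`. -/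
def shift (m : ℕ → ℕ) (i : ℕ) : ℕ := if i = 0 then 1 else m (i + 1)

variable {m : ℕ → ℕ}

lemma prod_range_add_two_eq_mul_prod_shift (hm0 : m 0 = 1) (r : ℕ) :
    ∏ i ∈ range (r + 2), m i = m 1 * ∏ i ∈ range (r + 1), shift m i := by
  simp [prod_range_succ', shift, hm0, mul_comm]

lemma isPart_iff (hm0 : m 0 = 1) {j : ℕ} :
    IsPart m j ↔ j = 1 ∨ ∃ j', IsPart (shift m) j' ∧ j = m 1 * j' := by
  constructor
  · rintro ⟨_ | r, rfl⟩
    · simp [hm0]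
    · exact Or.inr ⟨_, ⟨r, rfl⟩, prod_range_add_two_eq_mul_prod_shift hm0 r⟩
  · rintro (rfl | ⟨_, ⟨r, rfl⟩, rfl⟩)
    · exact ⟨0, by simp [hm0]⟩
    · exact ⟨r + 1, (prod_range_add_two_eq_mul_prod_shift hm0 r).symm⟩

variable (m) in
abbrev Partition (N : ℕ) : Type := {p : N.Partition // ∀ x ∈ p.parts, IsPart m x}

lemma pM_eq_card (N : ℕ) : pM m N = Nat.card (Partition m N) := rfl

def ofShift (hm0 : m 0 = 1) (hm1 : 1 < m 1) {N : ℕ}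
    (s : Σ j : Fin (N / m 1 + 1), Partition (shift m) j) : Partition m N :=
  ⟨s.2.1.scalePad (by omega)
    ((Nat.mul_le_mul_left _ (Nat.lt_succ_iff.mp s.1.2)).trans (Nat.mul_div_le N (m 1))), by
    intro x hx
    rcases Multiset.mem_add.mp hx with hx | hx
    · obtain ⟨y, hy, rfl⟩ := Multiset.mem_map.mp hx
      exact (isPart_iff hm0).mpr (Or.inr ⟨y, s.2.2 y hy, rfl⟩)
    · exact (isPart_iff hm0).mpr (Or.inl (Multiset.eq_of_mem_replicate hx))⟩

lemma ofShift_injective (hm0 : m 0 = 1) (hm1 : 1 < m 1) (N : ℕ) :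
    Function.Injective (ofShift hm0 hm1 (N := N)) := by
  rintro ⟨j, q, hq⟩ ⟨j', q', hq'⟩ h
  have hmap : q.parts.map (m 1 * ·) = q'.parts.map (m 1 * ·) := by
    have := congrArg (fun p : Partition m N => p.1.parts.filter (· ≠ 1)) h
    dsimp only [ofShift] at this
    rwa [Nat.Partition.filter_ne_one_scalePad_parts _ hm1,
      Nat.Partition.filter_ne_one_scalePad_parts _ hm1] at this
  have hparts : q.parts = q'.parts :=
    Multiset.map_injective (mul_right_injective₀ (by omega)) hmap
  obtain rfl : j = j' := Fin.ext (by rw [← q.parts_sum, ← q'.parts_sum, hparts])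
  obtain rfl : q = q' := Nat.Partition.ext hparts
  rfl

lemma ofShift_surjective (hm0 : m 0 = 1) (hm1 : 1 < m 1) (N : ℕ) :
    Function.Surjective (ofShift hm0 hm1 (N := N)) := by
  rintro ⟨p, hp⟩
  set B := p.parts.filter (· ≠ 1) with hB_def
  have hB : ∀ x ∈ B, ∃ x', IsPart (shift m) x' ∧ x = m 1 * x' := by
    intro x hx
    obtain ⟨hxp, hx1⟩ := Multiset.mem_filter.mp hx
    exact ((isPart_iff hm0).mp (hp x hxp)).resolve_left hx1
  set t := B.map (· / m 1)
  have ht : t.map (m 1 * ·) = B := by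
    rw [Multiset.map_map]
    refine (Multiset.map_congr rfl fun x hx => ?_).trans (Multiset.map_id B)
    obtain ⟨x', -, rfl⟩ := hB x hx
    simp [Nat.mul_div_cancel_left x' (by omega : 0 < m 1)]
  have ht_pos : ∀ {x}, x ∈ t → 0 < x := by
    intro x hx
    obtain ⟨y, hy, rfl⟩ := Multiset.mem_map.mp hx
    obtain ⟨y', -, rfl⟩ := hB y hy
    rw [Nat.mul_div_cancel_left y' (by omega)]
    exact Nat.pos_of_mul_pos_left (p.parts_pos (Multiset.mem_of_mem_filter hy))
  have hsum : m 1 * t.sum + p.parts.count 1 = N := by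
    have := congrArg Multiset.sum (Multiset.filter_ne_add_replicate_count p.parts 1)
    rwa [← hB_def, Multiset.sum_add, ← ht, Multiset.sum_map_mul_left, Multiset.map_id',
      Multiset.sum_replicate, smul_eq_mul, mul_one, p.parts_sum] at this
  have ht_le : t.sum < N / m 1 + 1 :=
    Nat.lt_succ_of_le ((Nat.le_div_iff_mul_le (by omega)).mpr (by rw [mul_comm]; omega))
  refine ⟨⟨⟨t.sum, ht_le⟩, ⟨t, ht_pos, rfl⟩, fun x hx => ?_⟩, ?_⟩
  · obtain ⟨y, hy, rfl⟩ := Multiset.mem_map.mp hx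
    obtain ⟨y', hy', rfl⟩ := hB y hy
    rwa [Nat.mul_div_cancel_left y' (by omega)]
  · refine Subtype.ext (Nat.Partition.ext ?_)
    change t.map (m 1 * ·) + Multiset.replicate (N - m 1 * t.sum) 1 = p.parts
    rw [ht, show N - m 1 * t.sum = p.parts.count 1 by omega,
      Multiset.filter_ne_add_replicate_count]

lemma pM_eq_sum_range (hm0 : m 0 = 1) (hm1 : 1 < m 1) (N : ℕ) :
    pM m N = ∑ j ∈ range (N / m 1 + 1), pM (shift m) j := by
  rw [pM_eq_card, ← Nat.card_congr (Equiv.ofBijective _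
    ⟨ofShift_injective hm0 hm1 N, ofShift_surjective hm0 hm1 N⟩), Nat.card_sigma,
    ← Fin.sum_univ_eq_sum_range (fun j => pM (shift m) j)]
  rfl

end MAry

open MAry in
/-- The case `r = 3` of the main theorem: `m₂ · (m₃ / gcd(m₃, 2))` divides
`p_M(m₁ m₂ m₃ n - 1)` for every positive integer `n`. -/
theorem pM_congruence_r_three (m : ℕ → ℕ) (hm0 : m 0 = 1) (hm : ∀ i, 1 ≤ i → 2 ≤ m i)
    (n : ℕ) (hn : 1 ≤ n) :
    m 2 * (m 3 / Nat.gcd (m 3) 2) ∣ pM m (m 1 * m 2 * m 3 * n - 1) := by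
  have hm1 : 1 < m 1 := hm 1 le_rfl
  have hm2 : 1 < m 2 := hm 2 (by norm_num)
  have hm3 : 1 < m 3 := hm 3 (by norm_num)
  have hN : (m 1 * m 2 * m 3 * n - 1) / m 1 + 1 = m 2 * (m 3 * n) := by
    rw [mul_assoc, mul_assoc, Nat.mul_sub_one_div_add_one (by omega)
      (Nat.mul_pos (by omega) (Nat.mul_pos (by omega) hn))]
  have hrec₂ (j : ℕ) :
      pM (shift m) j = ∑ l ∈ range (j / m 2 + 1), pM (shift (shift m)) l :=
    pM_eq_sum_range (m := shift m) rfl hm2 j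
  have hrec₃ (l : ℕ) :
      pM (shift (shift m)) l = ∑ v ∈ range (l / m 3 + 1), pM (shift (shift (shift m))) v :=
    pM_eq_sum_range (m := shift (shift m)) rfl hm3 l
  rw [pM_eq_sum_range hm0 hm1, hN]
  simp_rw [hrec₂]
  rw [sum_range_mul_comp_div (fun k => ∑ l ∈ range (k + 1), pM (shift (shift m)) l)
    (by omega : 0 < m 2) (m 3 * n), smul_eq_mul]
  simp_rw [hrec₃]
  exact mul_dvd_mul_left (m 2) (Nat.div_gcd_two_dvd_sum_range_sum_range
    (fun u => ∑ v ∈ range (u + 1), pM (shift (shift (shift m))) v) (m 3) n)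
end

section
/- For all positive integers m and r, the greatest common divisor of the numbers m / gcd(m, j) for j = 1, …, r equals m / gcd(m, lcm(1, …, r)). That is, gcd{ μ(m,j) : j = 1,…,r } = 𝓜(m,r). -/
/-! `gcd(m, ·)` distributes over `lcm` (compare exponents prime by prime), so
`gcd(m, lcm(1,…,r)) = lcm_j gcd(m, j)`; and on the divisors of `m` the map `d ↦ m / d`
reverses divisibility, hence turns that `lcm` into the `gcd` of the `m / gcd(m, j)`. -/

namespace Nat

theorem gcd_lcm_distrib_left (m a b : ℕ) : gcd m (lcm a b) = lcm (gcd m a) (gcd m b) := by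
  rcases eq_or_ne m 0 with rfl | hm
  · simp
  rcases eq_or_ne a 0 with rfl | ha
  · simp [lcm_eq_left (gcd_dvd_left m b)]
  rcases eq_or_ne b 0 with rfl | hb
  · simp [lcm_eq_right (gcd_dvd_left m a)]
  apply eq_of_factorization_eq (gcd_ne_zero_left hm)
    (lcm_ne_zero (gcd_ne_zero_left hm) (gcd_ne_zero_left hm))
  intro p
  simp only [factorization_gcd hm (lcm_ne_zero ha hb), factorization_lcm ha hb,
    factorization_lcm (gcd_ne_zero_left hm) (gcd_ne_zero_left hm), factorization_gcd hm ha,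
    factorization_gcd hm hb, Finsupp.inf_apply, Finsupp.sup_apply]
  exact inf_sup_left _ _ _

theorem gcd_finset_lcm {ι : Type*} (m : ℕ) (s : Finset ι) (f : ι → ℕ) :
    gcd m (s.lcm f) = s.lcm (fun i => gcd m (f i)) := by
  classical
  induction s using Finset.induction_on with
  | empty => simp
  | insert i s _ ih => simp only [Finset.lcm_insert, ← ih]; exact gcd_lcm_distrib_left m (f i) _

theorem dvd_div_comm {a b m : ℕ} (ha : a ∣ m) (hb : b ∣ m) : a ∣ m / b ↔ b ∣ m / a := by
  rw [Nat.dvd_div_iff_mul_dvd hb, Nat.dvd_div_iff_mul_dvd ha, mul_comm]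

theorem finset_gcd_div_eq_div_lcm {ι : Type*} {s : Finset ι} (hs : s.Nonempty) {m : ℕ}
    {d : ι → ℕ} (hd : ∀ i ∈ s, d i ∣ m) : s.gcd (fun i => m / d i) = m / s.lcm d := by
  have hL : s.lcm d ∣ m := Finset.lcm_dvd hd
  obtain ⟨i₀, hi₀⟩ := hs
  have hg : s.gcd (fun i => m / d i) ∣ m := (Finset.gcd_dvd hi₀).trans (div_dvd_of_dvd (hd i₀ hi₀))
  refine Nat.dvd_antisymm ?_ (Finset.dvd_gcd fun i hi => div_dvd_div_left hL (Finset.dvd_lcm hi))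
  refine (dvd_div_comm hg hL).2 (Finset.lcm_dvd fun i hi => ?_)
  exact (dvd_div_comm hg (hd i hi)).1 (Finset.gcd_dvd hi)

end Nat

theorem gcd_mu_eq_Mcal_general (m r : ℕ) (hr : 1 ≤ r) :
    (Finset.Icc 1 r).gcd (fun j => m / Nat.gcd m j) =
      m / Nat.gcd m ((Finset.Icc 1 r).lcm id) := by
  rw [Nat.gcd_finset_lcm]
  exact Nat.finset_gcd_div_eq_div_lcm ⟨1, Finset.mem_Icc.2 ⟨le_rfl, hr⟩⟩
    fun j _ => Nat.gcd_dvd_left m j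

/-- `gcd{ m / gcd(m,j) : j = 1,…,r } = m / gcd(m, lcm(1,…,r))`. -/
theorem gcd_mu_eq_Mcal (m r : ℕ) (hm : 1 ≤ m) (hr : 1 ≤ r) :
    (Finset.Icc 1 r).gcd (fun j => m / Nat.gcd m j) =
      m / Nat.gcd m ((Finset.Icc 1 r).lcm id) :=
  gcd_mu_eq_Mcal_general m r hr
end

section
/- For any integers m ≥ 2 and r ≥ 1 there exist unique integers c_1, …, c_r such that for every integer n ≥ 1, binom(m·n + r − 1, r) = Σ_{i=1}^{r} c_i · binom(n + i − 1, i). -/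
open Finset Polynomial Function
open scoped fwdDiff

private lemma choose_step (a j : ℕ) :
    Δ_[1] (fun n : ℕ => ((n + a).choose (j + 1) : ℤ)) =
      fun n : ℕ => ((n + a).choose j : ℤ) := by
  funext n
  have h : n + 1 + a = (n + a) + 1 := by omega
  simp only [fwdDiff, h, Nat.choose_succ_succ]
  push_cast
  ring

private lemma choose_iter (a j k : ℕ) (hk : k ≤ j) :
    (Δ_[1])^[k] (fun n : ℕ => ((n + a).choose j : ℤ)) =
      fun n : ℕ => ((n + a).choose (j - k) : ℤ) := by
  induction k generalizing j with
  | zero => simp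
  | succ k IH =>
      obtain ⟨j', rfl⟩ : ∃ j', j = j' + 1 := ⟨j - 1, by omega⟩
      rw [show j' + 1 - (k + 1) = j' - k from by omega]
      rw [Function.iterate_succ_apply, choose_step, IH j' (by omega)]

private lemma choose_iter_zero (a j k : ℕ) (hk : j < k) :
    (Δ_[1])^[k] (fun n : ℕ => ((n + a).choose j : ℤ)) = 0 := by
  obtain ⟨t, rfl⟩ : ∃ t, k = t + (1 + j) := ⟨k - (1 + j), by omega⟩
  rw [Function.iterate_add_apply, Function.iterate_add_apply,
    choose_iter a j j le_rfl]
  simp only [Nat.sub_self, Nat.choose_zero_right, Nat.cast_one, iterate_one, fwdDiff_const]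
  have hz : Δ_[1] (fun _ : ℕ => (0 : ℤ)) = fun _ : ℕ => (0 : ℤ) := by
    funext x; simp [fwdDiff]
  rw [Function.iterate_fixed hz t]
  rfl

private lemma fwdDiff_poly_eval (P : ℚ[X]) :
    Δ_[1] (fun n : ℕ => P.eval (n : ℚ)) =
      fun n : ℕ => (Polynomial.taylor 1 P - P).eval (n : ℚ) := by
  funext n
  simp [fwdDiff, Polynomial.taylor_eval, Nat.cast_add, Nat.cast_one]

private lemma fwdDiff_iter_poly (d : ℕ) :
    ∀ P : ℚ[X], P.natDegree ≤ d → (Δ_[1])^[d + 1] (fun n : ℕ => P.eval (n : ℚ)) = 0 := by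
  induction d with
  | zero =>
      intro P hP
      obtain ⟨x, rfl⟩ := Polynomial.natDegree_eq_zero.mp (Nat.le_zero.mp hP)
      funext n
      simp [Polynomial.eval_C, fwdDiff]
  | succ d IH =>
      intro P hP
      rw [Function.iterate_succ_apply, fwdDiff_poly_eval]
      apply IH
      by_cases h0 : P.natDegree = 0
      · obtain ⟨x, rfl⟩ := Polynomial.natDegree_eq_zero.mp h0
        simp [Polynomial.taylor_C]
      · have hPne : P ≠ 0 := fun h => h0 (by simp [h])
        have hTne : Polynomial.taylor 1 P ≠ 0 := by
          intro h
          exact hPne (Polynomial.taylor_injective 1 (by simpa using h))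
        have hdeg : (Polynomial.taylor 1 P).degree = P.degree := by
          rw [Polynomial.degree_eq_natDegree hTne, Polynomial.degree_eq_natDegree hPne,
            Polynomial.natDegree_taylor]
        have hlc : (Polynomial.taylor 1 P).leadingCoeff = P.leadingCoeff := by
          rw [Polynomial.taylor_apply,
            Polynomial.leadingCoeff_comp (by rw [Polynomial.natDegree_X_add_C]; exact one_ne_zero),
            (Polynomial.monic_X_add_C (1 : ℚ)).leadingCoeff, one_pow, mul_one]
        have hlt := Polynomial.degree_sub_lt hdeg hTne hlc
        rcases eq_or_ne (Polynomial.taylor 1 P - P) 0 with h | h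
        · simp [h]
        · have h2 := Polynomial.natDegree_lt_natDegree h hlt
          rw [Polynomial.natDegree_taylor] at h2
          omega

private lemma cast_fwdDiff_iter (f : ℕ → ℤ) (k : ℕ) (n : ℕ) :
    (((Δ_[1])^[k] f n : ℤ) : ℚ) = (Δ_[1])^[k] (fun j : ℕ => (f j : ℚ)) n := by
  induction k generalizing n with
  | zero => rfl
  | succ k IH =>
      rw [Function.iterate_succ_apply', Function.iterate_succ_apply']
      simp only [fwdDiff]
      push_cast
      rw [IH, IH]

private lemma fwdDiff_iter_f_zero (m r : ℕ) (hr : 1 ≤ r) (k : ℕ) (hk : r < k) :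
    (Δ_[1])^[k] (fun n : ℕ => ((m * n + r - 1).choose r : ℤ)) = 0 := by
  set P : ℚ[X] := Polynomial.C ((r.factorial : ℚ))⁻¹ *
      (descPochhammer ℚ r).comp
        (Polynomial.C (m : ℚ) * Polynomial.X + Polynomial.C ((r : ℚ) - 1)) with hP
  have hev : ∀ n : ℕ, P.eval (n : ℚ) = ((m * n + r - 1).choose r : ℚ) := by
    intro n
    have h1 : ((m * n + r - 1 : ℕ) : ℚ) = (m : ℚ) * n + ((r : ℚ) - 1) := by
      rw [show m * n + r - 1 = m * n + (r - 1) from by omega]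
      push_cast [Nat.cast_sub hr]
      ring
    rw [hP]
    simp only [Polynomial.eval_mul, Polynomial.eval_C, Polynomial.eval_comp, Polynomial.eval_add,
      Polynomial.eval_X, ← h1, descPochhammer_eval_eq_descFactorial]
    rw [Nat.descFactorial_eq_factorial_mul_choose]
    push_cast
    rw [← mul_assoc, inv_mul_cancel₀ (by exact_mod_cast r.factorial_ne_zero), one_mul]
  have hdeg : P.natDegree ≤ r := by
    refine le_trans (Polynomial.natDegree_C_mul_le _ _) (le_trans Polynomial.natDegree_comp_le ?_)
    have h1 : (Polynomial.C (m : ℚ) * Polynomial.X + Polynomial.C ((r : ℚ) - 1)).natDegree ≤ 1 :=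
      Polynomial.natDegree_linear_le
    have h2 : (descPochhammer ℚ r).natDegree = r := descPochhammer_natDegree ℚ r
    calc (descPochhammer ℚ r).natDegree *
          (Polynomial.C (m : ℚ) * Polynomial.X + Polynomial.C ((r : ℚ) - 1)).natDegree
        ≤ (descPochhammer ℚ r).natDegree * 1 := Nat.mul_le_mul_left _ h1
      _ = r := by rw [mul_one, h2]
  have h1 : (Δ_[1])^[r + 1] (fun n : ℕ => P.eval (n : ℚ)) = 0 := fwdDiff_iter_poly r P hdeg
  funext n
  have key : (((Δ_[1])^[k] (fun n : ℕ => ((m * n + r - 1).choose r : ℤ)) n : ℤ) : ℚ) = 0 := by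
    rw [cast_fwdDiff_iter]
    have hcongr : (fun j : ℕ => ((((m * j + r - 1).choose r : ℤ)) : ℚ)) =
        fun j : ℕ => P.eval (j : ℚ) := by
      funext j
      rw [hev j]
      push_cast
      ring
    rw [hcongr]
    obtain ⟨t, rfl⟩ : ∃ t, k = t + (r + 1) := ⟨k - (r + 1), by omega⟩
    rw [Function.iterate_add_apply, h1]
    have hz : Δ_[1] (fun _ : ℕ => (0 : ℚ)) = fun _ : ℕ => (0 : ℚ) := by
      funext x; simp [fwdDiff]
    have : (Δ_[1])^[t] (0 : ℕ → ℚ) = 0 := Function.iterate_fixed hz t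
    rw [this]
    rfl
  exact_mod_cast key

/-- For integers `m ≥ 2`, `r ≥ 1` there exist unique integers `c₁, …, c_r` such that
`binom(m·n + r - 1, r) = ∑_{i=1}^r cᵢ · binom(n + i - 1, i)` for every integer `n ≥ 1`. -/
theorem exists_unique_alpha (m r : ℕ) (hm : 2 ≤ m) (hr : 1 ≤ r) :
    ∃! c : Fin r → ℤ, ∀ n : ℕ, 1 ≤ n →
      ((m * n + r - 1).choose r : ℤ) =
        ∑ i : Fin r, c i * ((n + (i : ℕ)).choose ((i : ℕ) + 1)) := by
  classical
  set f : ℕ → ℤ := fun n => ((m * n + r - 1).choose r : ℤ) with hf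
  set b : Fin r → ℕ → ℤ := fun i n => ((n + (i : ℕ)).choose ((i : ℕ) + 1) : ℤ) with hb
  have hb0 : ∀ i : Fin r, b i 0 = 0 := by
    intro i
    simp only [hb]
    rw [Nat.choose_eq_zero_of_lt (by omega)]
    simp
  have hf0 : f 0 = 0 := by
    simp only [hf]
    rw [show m * 0 + r - 1 = r - 1 from by omega, Nat.choose_eq_zero_of_lt (by omega)]
    simp
  have hΔb : ∀ (i : Fin r) (k : ℕ), (Δ_[1])^[k + 1] (b i) 0 =
      if (k : ℕ) ≤ (i : ℕ) then ((i : ℕ).choose k : ℤ) else 0 := by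
    intro i k
    by_cases h : k ≤ (i : ℕ)
    · rw [if_pos h, hb]
      rw [choose_iter (i : ℕ) ((i : ℕ) + 1) (k + 1) (by omega)]
      simp only [zero_add]
      rw [show (i : ℕ) + 1 - (k + 1) = (i : ℕ) - k from by omega, Nat.choose_symm h]
    · rw [if_neg h, hb, choose_iter_zero (i : ℕ) ((i : ℕ) + 1) (k + 1) (by omega)]
      rfl
  have hΔg : ∀ (c : Fin r → ℤ) (k : ℕ),
      (Δ_[1])^[k] (fun n => ∑ i, c i * b i n) = fun n => ∑ i, c i * (Δ_[1])^[k] (b i) n := by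
    intro c k
    have h1 : (fun n => ∑ i, c i * b i n) = ∑ i : Fin r, c i • b i := by
      funext n
      simp [Finset.sum_apply]
    rw [h1, fwdDiff_iter_finset_sum]
    funext n
    rw [Finset.sum_apply]
    refine Finset.sum_congr rfl fun i _ => ?_
    rw [fwdDiff_iter_const_smul, Pi.smul_apply, smul_eq_mul]
  set A : Matrix (Fin r) (Fin r) ℤ :=
    Matrix.of (fun k i : Fin r =>
      if (k : ℕ) ≤ (i : ℕ) then ((i : ℕ).choose (k : ℕ) : ℤ) else 0) with hA
  set v : Fin r → ℤ := fun k => (Δ_[1])^[(k : ℕ) + 1] f 0 with hv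
  have hAc : ∀ (c : Fin r → ℤ) (k : Fin r),
      A.mulVec c k = (Δ_[1])^[(k : ℕ) + 1] (fun n => ∑ i, c i * b i n) 0 := by
    intro c k
    rw [hΔg]
    simp only [Matrix.mulVec, dotProduct, hA, Matrix.of_apply]
    refine Finset.sum_congr rfl fun i _ => ?_
    rw [hΔb]
    ring
  have hmain : ∀ c : Fin r → ℤ,
      (∀ n : ℕ, 1 ≤ n → f n = ∑ i, c i * b i n) ↔ A.mulVec c = v := by
    intro c
    constructor
    · intro h
      have hfg : f = fun n => ∑ i, c i * b i n := by
        funext n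
        rcases Nat.eq_zero_or_pos n with rfl | hn
        · rw [hf0]
          simp [hb0]
        · exact h n hn
      funext k
      rw [hAc, hv, hfg]
    · intro h n hn
      have hD : ∀ k : ℕ, (Δ_[1])^[k] f 0 = (Δ_[1])^[k] (fun n => ∑ i, c i * b i n) 0 := by
        intro k
        match k with
        | 0 => simpa [hf0] using (by simp [hb0] : (0 : ℤ) = ∑ i : Fin r, c i * b i 0)
        | Nat.succ k =>
          by_cases hk : k < r
          · have := congrFun h ⟨k, hk⟩
            rw [hAc] at this
            simpa [hv, Nat.succ_eq_add_one] using this.symm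
          · rw [hΔg]
            have h1 : (Δ_[1])^[k + 1] f = 0 := fwdDiff_iter_f_zero m r hr (k + 1) (by omega)
            rw [show ((Δ_[1])^[k + 1] f) 0 = (0 : ℕ → ℤ) 0 from by rw [h1]]
            have h2 : ∀ i : Fin r, (Δ_[1])^[k + 1] (b i) 0 = 0 := by
              intro i
              rw [hb, choose_iter_zero (i : ℕ) ((i : ℕ) + 1) (k + 1) (by omega)]
              rfl
            simp [h2]
      have h1 := shift_eq_sum_fwdDiff_iter (1 : ℕ) f n 0
      have h2 := shift_eq_sum_fwdDiff_iter (1 : ℕ) (fun n => ∑ i, c i * b i n) n 0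
      rw [show (0 + n • 1 : ℕ) = n from by simp] at h1 h2
      rw [h1, h2]
      exact Finset.sum_congr rfl fun k _ => by rw [hD k]
  have hdet : A.det = 1 := by
    rw [Matrix.det_of_upperTriangular (M := A) ?htri]
    · have : ∀ k : Fin r, A k k = 1 := by
        intro k
        simp [hA]
      simp [this]
    · intro i j hij
      simp only [hA, Matrix.of_apply]
      rw [if_neg]
      exact fun h => absurd hij (by simpa using Fin.le_def.mpr h)
  have hu : IsUnit A.det := by
    rw [hdet]; exact isUnit_one
  have hEU : ∃! c : Fin r → ℤ, A.mulVec c = v := by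
    refine ⟨A⁻¹.mulVec v, ?_, ?_⟩
    · show A.mulVec (A⁻¹.mulVec v) = v
      rw [Matrix.mulVec_mulVec, Matrix.mul_nonsing_inv A hu, Matrix.one_mulVec]
    · intro c hc
      calc c = (A⁻¹ * A).mulVec c := by rw [Matrix.nonsing_inv_mul A hu, Matrix.one_mulVec]
        _ = A⁻¹.mulVec v := by rw [← Matrix.mulVec_mulVec, hc]
  exact (existsUnique_congr hmain).mpr hEU
end

section
/- For integers m ≥ 2 and r ≥ 1, the coefficients α_{m,r}(i) satisfy: (1) α_{m,r}(r) = m^r, and (2) if r ≥ 2, then 2·α_{m,r}(r−1) = −(r−1)(m−1)m^{r−1}, i.e., α_{m,r}(r−1) = −(1/2)(r−1)(m−1)m^{r−1}. -/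
/-!
Both sides of the defining identity are polynomials in `n`: with `b i` the polynomial
`n(n+1)⋯(n+i-1)/i!` taking the value `(n+i-1).choose i` at `n`, the identity reads
`b r (m n) = ∑ α i * b i n` at every positive integer, hence holds in `ℚ[X]`. Comparing the
coefficients of `X^r` gives `α r = m^r`. In degree `r-1` only `b r` and `b (r-1)` contribute, and
the coefficient of `X^i` in `X(X+1)⋯(X+i)` is `0 + 1 + ⋯ + i = (i+1).choose 2`.
-/

open Polynomial Finset Nat

theorem Polynomial.coeff_ascPochhammer_succ_self {S : Type*} [Semiring S] (n : ℕ) :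
    (ascPochhammer S (n + 1)).coeff n = ((n + 1).choose 2 : S) := by
  suffices h : (ascPochhammer ℕ (n + 1)).coeff n = (n + 1).choose 2 by
    rw [← ascPochhammer_map (algebraMap ℕ S), coeff_map, h, eq_natCast]
  induction n with
  | zero => simp
  | succ n ih =>
    have htop : (ascPochhammer ℕ (n + 1)).coeff (n + 1) = 1 := by
      simpa using (monic_ascPochhammer ℕ (n + 1)).coeff_natDegree
    rw [ascPochhammer_succ_right, mul_add, coeff_add, coeff_mul_X, ← C_eq_natCast, coeff_mul_C,
      ih, htop, Nat.choose_succ_succ (n + 1) 1, Nat.choose_one_right, Nat.cast_id]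
    ring

theorem Polynomial.coeff_sum_of_natDegree_le {R : Type*} [Semiring R] (s : Finset ℕ)
    (p : ℕ → R[X]) (hp : ∀ i ∈ s, (p i).natDegree ≤ i) (k : ℕ) :
    (∑ i ∈ s, p i).coeff k = ∑ i ∈ s with k ≤ i, (p i).coeff k := by
  rw [finsetSum_coeff, sum_filter]
  refine sum_congr rfl fun i hi => ?_
  split_ifs with hki
  · rfl
  · exact coeff_eq_zero_of_natDegree_lt ((hp i hi).trans_lt (not_le.mp hki))

theorem Polynomial.eq_of_eval_natCast_eq {R : Type*} [CommRing R] [IsDomain R] [CharZero R]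
    {p q : R[X]} (N : ℕ) (h : ∀ n : ℕ, N ≤ n → p.eval (n : R) = q.eval (n : R)) : p = q := by
  refine eq_of_infinite_eval_eq p q (Set.Infinite.mono ?_ ((Set.Ici_infinite N).image
    Nat.cast_injective.injOn))
  rintro _ ⟨n, hn, rfl⟩
  exact h n hn

section multichoosePoly

variable (F : Type*) [Field F]

noncomputable def multichoosePoly (i : ℕ) : F[X] := C (i ! : F)⁻¹ * ascPochhammer F i

theorem natDegree_multichoosePoly_le (i : ℕ) : (multichoosePoly F i).natDegree ≤ i :=
  natDegree_C_mul_le _ _ |>.trans (ascPochhammer_natDegree F i).le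

theorem coeff_multichoosePoly_succ_self (i : ℕ) :
    (multichoosePoly F (i + 1)).coeff i = ((i + 1).choose 2 : F) / (i + 1)! := by
  rw [multichoosePoly, coeff_C_mul, coeff_ascPochhammer_succ_self, inv_mul_eq_div]

theorem coeff_multichoosePoly_self (i : ℕ) : (multichoosePoly F i).coeff i = (i ! : F)⁻¹ := by
  have hmonic := (monic_ascPochhammer F i).coeff_natDegree
  rw [ascPochhammer_natDegree] at hmonic
  rw [multichoosePoly, coeff_C_mul, hmonic, mul_one]

theorem eval_natCast_multichoosePoly [CharZero F] (i n : ℕ) :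
    (multichoosePoly F i).eval (n : F) = ((n + i - 1).choose i : F) := by
  rw [multichoosePoly, eval_C_mul, ascPochhammer_nat_eq_natCast_ascFactorial,
    ascFactorial_eq_factorial_mul_choose', cast_mul,
    inv_mul_cancel_left₀ (cast_ne_zero.mpr (factorial_ne_zero i))]

end multichoosePoly

theorem multichoosePoly_comp_eq_sum {F : Type*} [Field F] [CharZero F] (m r : ℕ) (α : ℕ → ℤ)
    (hα : ∀ n : ℕ, 1 ≤ n →
      ((m * n + r - 1).choose r : ℤ) = ∑ i ∈ Icc 1 r, α i * ((n + i - 1).choose i)) :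
    (multichoosePoly F r).comp (C (m : F) * X) =
      ∑ i ∈ Icc 1 r, C (α i : F) * multichoosePoly F i := by
  refine eq_of_eval_natCast_eq 1 fun n hn => ?_
  simp only [eval_comp, eval_mul, eval_C, eval_X, eval_finsetSum, ← cast_mul,
    eval_natCast_multichoosePoly]
  exact_mod_cast hα n hn

theorem alpha_top_coeffs_general (m r : ℕ) (hr : 1 ≤ r) (α : ℕ → ℤ)
    (hα : ∀ n : ℕ, 1 ≤ n →
      ((m * n + r - 1).choose r : ℤ) =
        ∑ i ∈ Finset.Icc 1 r, α i * ((n + i - 1).choose i)) :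
    α r = (m : ℤ) ^ r ∧
      (2 ≤ r → 2 * α (r - 1) = -(((r : ℤ) - 1) * ((m : ℤ) - 1) * (m : ℤ) ^ (r - 1))) := by
  obtain ⟨s, rfl⟩ : ∃ s, r = s + 1 := ⟨r - 1, by omega⟩
  have hcoeff (k : ℕ) : (multichoosePoly ℚ (s + 1)).coeff k * (m : ℚ) ^ k =
      ∑ i ∈ Icc 1 (s + 1) with k ≤ i, (α i : ℚ) * (multichoosePoly ℚ i).coeff k := by
    rw [← comp_C_mul_X_coeff, multichoosePoly_comp_eq_sum m (s + 1) α hα,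
      coeff_sum_of_natDegree_le _ _ (fun i _ => (natDegree_C_mul_le _ _).trans
        (natDegree_multichoosePoly_le ℚ i))]
    simp only [coeff_C_mul]
  have htop : (α (s + 1) : ℚ) = (m : ℚ) ^ (s + 1) := by
    have h := hcoeff (s + 1)
    rw [show {i ∈ Icc 1 (s + 1) | s + 1 ≤ i} = {s + 1} by
        ext; simp only [mem_filter, mem_Icc, mem_singleton]; omega,
      sum_singleton, coeff_multichoosePoly_self] at h
    have hfac : ((s + 1)! : ℚ) ≠ 0 := cast_ne_zero.mpr (factorial_ne_zero _)
    field_simp at h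
    exact h.symm
  refine ⟨by exact_mod_cast htop, fun hs => ?_⟩
  have h := hcoeff s
  rw [show {i ∈ Icc 1 (s + 1) | s ≤ i} = {s, s + 1} by
        ext; simp only [mem_filter, mem_Icc, mem_insert, mem_singleton]; omega,
    sum_pair (by omega),
    coeff_multichoosePoly_self, coeff_multichoosePoly_succ_self, htop] at h
  have hfac : (s ! : ℚ) ≠ 0 := cast_ne_zero.mpr (factorial_ne_zero _)
  rw [factorial_succ, cast_mul, cast_choose_two] at h
  field_simp at h
  push_cast at h
  simp only [add_tsub_cancel_right]
  qify
  linear_combination -h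

/-- The coefficients `α_{m,r}(i)` satisfy `α_{m,r}(r) = m^r` and, for `r ≥ 2`,
`2·α_{m,r}(r-1) = -(r-1)(m-1)m^(r-1)`. -/
theorem alpha_top_coeffs (m r : ℕ) (hm : 2 ≤ m) (hr : 1 ≤ r) (α : ℕ → ℤ)
    (hα : ∀ n : ℕ, 1 ≤ n →
      ((m * n + r - 1).choose r : ℤ) =
        ∑ i ∈ Finset.Icc 1 r, α i * ((n + i - 1).choose i)) :
    α r = (m : ℤ) ^ r ∧
      (2 ≤ r → 2 * α (r - 1) = -(((r : ℤ) - 1) * ((m : ℤ) - 1) * (m : ℤ) ^ (r - 1))) :=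
  alpha_top_coeffs_general m r hr α hα
end

section
/- For all integers m ≥ 2, r ≥ 2 and every i with 1 ≤ i ≤ r, the coefficients α_{m,r}(i) satisfy the recurrence r·α_{m,r}(i) − (r−1)·α_{m,r−1}(i) = m·i·(α_{m,r−1}(i−1) − α_{m,r−1}(i)). -/
/-!
Write `M(n, j) = Nat.multichoose n j = C(n + j - 1, j)`. The single identity
`(j + 1) M(n, j + 1) = (n + j) M(n, j)` gives both `r M(mn, r) = (mn + r - 1) M(mn, r - 1)` and,
after splitting `mn + r - 1 = m(n + j) + (r - 1 - mj)`, the effect of multiplying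
`∑ α_{m,r-1}(j) M(n, j)` by `mn + r - 1` on the coefficients. The recurrence then follows by
comparing coefficients: the functions `n ↦ M(n, j)` are linearly independent on every tail
`n ≥ N`, since taking the forward difference in `n` lowers `j` by one.
-/

open Finset

theorem Nat.add_one_mul_multichoose_add_one (n k : ℕ) :
    (k + 1) * n.multichoose (k + 1) = (n + k) * n.multichoose k := by
  rw [multichoose_eq, multichoose_eq, ← Nat.add_assoc, Nat.add_sub_cancel]
  cases h : n + k with
  | zero => simp
  | succ t => rw [Nat.add_sub_cancel, add_one_mul_choose_eq, Nat.mul_comm]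

theorem sum_Icc_one_eq_sum_range {M : Type*} [AddCommMonoid M] {f : ℕ → M} (hf : f 0 = 0)
    (r : ℕ) : ∑ j ∈ Icc 1 r, f j = ∑ j ∈ range (r + 1), f j := by
  rw [sum_range_eq_add_Ico _ (Nat.add_one_pos r), hf, zero_add, Ico_add_one_right_eq_Icc]

theorem sum_mul_multichoose_succ_sub (c : ℕ → ℤ) (R n : ℕ) :
    ∑ j ∈ range (R + 2), c j * (n + 1).multichoose j
      - ∑ j ∈ range (R + 2), c j * n.multichoose j
      = ∑ j ∈ range (R + 1), c (j + 1) * (n + 1).multichoose j := by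
  rw [← sum_sub_distrib, sum_range_succ']
  simp [Nat.multichoose_succ_succ, mul_add]

theorem eq_zero_of_sum_mul_multichoose_eq_zero {R N : ℕ} {c : ℕ → ℤ}
    (h : ∀ n ≥ N, ∑ j ∈ range (R + 1), c j * n.multichoose j = 0) :
    ∀ j ≤ R, c j = 0 := by
  induction R generalizing N c with
  | zero => simpa using h N le_rfl
  | succ R ih =>
    have htail : ∀ j ≤ R, c (j + 1) = 0 := by
      refine ih (N := N + 1) fun n hn => ?_
      obtain ⟨n, rfl⟩ : ∃ n', n = n' + 1 := ⟨n - 1, by omega⟩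
      rw [← sum_mul_multichoose_succ_sub, h _ (by omega), h _ (by omega), sub_zero]
    have hhead : c 0 = 0 := by
      have hN := h N le_rfl
      rwa [sum_range_succ', sum_eq_zero fun j hj => by rw [htail j (mem_range_succ_iff.mp hj),
        zero_mul], zero_add, Nat.multichoose_zero_right, Nat.cast_one, mul_one] at hN
    rintro (_ | j) hj
    · exact hhead
    · exact htail j (by omega)

theorem linear_mul_sum_mul_multichoose (x y : ℤ) {R : ℕ} {a : ℕ → ℤ} (ha : a (R + 1) = 0)
    (n : ℕ) :
    (x * n + y) * ∑ j ∈ range (R + 1), a j * n.multichoose j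
      = ∑ j ∈ range (R + 2), (x * j * a (j - 1) + (y - x * j) * a j) * n.multichoose j := by
  have hterm : ∀ j, (x * n + y) * (a j * n.multichoose j)
      = x * (j + 1) * a j * n.multichoose (j + 1) + (y - x * j) * a j * n.multichoose j := by
    intro j
    have h := congrArg (Nat.cast (R := ℤ)) (Nat.add_one_mul_multichoose_add_one n j)
    push_cast at h
    linear_combination -(x * a j) * h
  have hshift : ∑ j ∈ range (R + 1), x * (j + 1) * a j * n.multichoose (j + 1)
      = ∑ j ∈ range (R + 2), x * j * a (j - 1) * n.multichoose j := by
    rw [sum_range_succ' _ (R + 1)]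
    simp
  have hextend : ∑ j ∈ range (R + 1), (y - x * j) * a j * n.multichoose j
      = ∑ j ∈ range (R + 2), (y - x * j) * a j * n.multichoose j := by
    rw [sum_range_succ _ (R + 1), ha, mul_zero, zero_mul, add_zero]
  rw [mul_sum, sum_congr rfl fun j _ => hterm j, sum_add_distrib, hshift, hextend,
    ← sum_add_distrib]
  simp only [add_mul]

theorem alpha_recurrence_general (m : ℕ) (α : ℕ → ℕ → ℤ)
    (hzero : ∀ r i : ℕ, i = 0 ∨ r < i → α r i = 0)
    (hdef : ∀ r : ℕ, 1 ≤ r → ∀ n : ℕ, 1 ≤ n →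
      ((m * n + r - 1).choose r : ℤ) =
        ∑ i ∈ Finset.Icc 1 r, α r i * ((n + i - 1).choose i))
    (r i : ℕ) (hr : 2 ≤ r) (hir : i ≤ r) :
    (r : ℤ) * α r i - ((r : ℤ) - 1) * α (r - 1) i =
      (m : ℤ) * (i : ℤ) * (α (r - 1) (i - 1) - α (r - 1) i) := by
  have hexpand : ∀ k ≥ 1, ∀ n ≥ 1,
      ((m * n).multichoose k : ℤ) = ∑ j ∈ range (k + 1), α k j * n.multichoose j := by
    intro k hk n hn
    rw [Nat.multichoose_eq, hdef k hk n hn, ← sum_Icc_one_eq_sum_range (by simp [hzero k 0])]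
    simp only [Nat.multichoose_eq]
  obtain ⟨s, rfl⟩ : ∃ s, r = s + 1 := ⟨r - 1, by omega⟩
  have hcoeff : ∀ n ≥ 1, ∑ j ∈ range (s + 2), ((s + 1) * α (s + 1) j
      - (m * j * α s (j - 1) + (s - m * j) * α s j)) * n.multichoose j = 0 := by
    intro n hn
    have hstep := congrArg (Nat.cast (R := ℤ)) (Nat.add_one_mul_multichoose_add_one (m * n) s)
    push_cast at hstep
    calc _ = (s + 1) * ∑ j ∈ range (s + 2), α (s + 1) j * n.multichoose j
          - ∑ j ∈ range (s + 2),
              (m * j * α s (j - 1) + (s - m * j) * α s j) * n.multichoose j := by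
          rw [mul_sum, ← sum_sub_distrib]
          exact sum_congr rfl fun j _ => by ring
      _ = (s + 1) * (m * n).multichoose (s + 1) - (m * n + s) * (m * n).multichoose s := by
          rw [hexpand (s + 1) (by omega) n hn, hexpand s (by omega) n hn,
            linear_mul_sum_mul_multichoose _ _ (hzero s (s + 1) (.inr s.lt_succ_self))]
      _ = 0 := by linear_combination hstep
  have hi := eq_zero_of_sum_mul_multichoose_eq_zero hcoeff i hir
  simp only [Nat.add_sub_cancel]
  push_cast
  linear_combination hi

/-- Recurrence for the coefficients `α_{m,r}(i)`:
`r·α_{m,r}(i) - (r-1)·α_{m,r-1}(i) = m·i·(α_{m,r-1}(i-1) - α_{m,r-1}(i))`. -/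
theorem alpha_recurrence (m : ℕ) (hm : 2 ≤ m) (α : ℕ → ℕ → ℤ)
    (hzero : ∀ r i : ℕ, i = 0 ∨ r < i → α r i = 0)
    (hdef : ∀ r : ℕ, 1 ≤ r → ∀ n : ℕ, 1 ≤ n →
      ((m * n + r - 1).choose r : ℤ) =
        ∑ i ∈ Finset.Icc 1 r, α r i * ((n + i - 1).choose i))
    (r i : ℕ) (hr : 2 ≤ r) (hi1 : 1 ≤ i) (hir : i ≤ r) :
    (r : ℤ) * α r i - ((r : ℤ) - 1) * α (r - 1) i =
      (m : ℤ) * (i : ℤ) * (α (r - 1) (i - 1) - α (r - 1) i) :=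
  alpha_recurrence_general m α hzero hdef r i hr hir
end

section
/- Let r ≥ 1 and let m_1, …, m_r be integers with m_j ≥ 2 for all j. Then there exist integers β_{(j_1,…,j_s)}, indexed by the nonempty sequences 1 ≤ j_1 < … < j_s ≤ r with 1 ≤ s ≤ r−1, such that H_{(m_1,…,m_r)} = m_1 m_2^2 ⋯ m_r^r · h_r − Σ_{s=1}^{r−1} Σ_{1 ≤ j_1 < … < j_s ≤ r} β_{(j_1,…,j_s)} · H_{(m_{j_1},…,m_{j_s})} in ℤ⟦q⟧, and moreover each β_{(j_1,…,j_s)} is divisible by the product ∏_{t} μ(m_t, t) taken over all t ∈ {1,…,r} with t ∉ {j_1,…,j_s}. -/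
/-- The operator `U_m` on `ℤ⟦q⟧`, sending `∑ a(n) qⁿ` to `∑ a(m·n) qⁿ`. -/
noncomputable def U (m : ℕ) (f : PowerSeries ℤ) : PowerSeries ℤ :=
  PowerSeries.mk fun n => PowerSeries.coeff (m * n) f

/-- `h r = q / (1-q)^(r+1)`; here `invUnitsSub 1` is the inverse of `1 - q` in `ℤ⟦q⟧`. -/
noncomputable def h (r : ℕ) : PowerSeries ℤ :=
  PowerSeries.X * (PowerSeries.invUnitsSub (1 : ℤˣ)) ^ (r + 1)

/-- Auxiliary: the series `H` defined by recursion on a reversed index list. -/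
noncomputable def HserRev : List ℕ → PowerSeries ℤ
  | [] => PowerSeries.X * PowerSeries.invUnitsSub (1 : ℤˣ)
  | mhead :: rest => U mhead (PowerSeries.invUnitsSub (1 : ℤˣ) * HserRev rest)

/-- `Hser [m₁, …, m_k] = H_{(m₁,…,m_k)}`: one has `Hser [] = H_∅ = q/(1-q)` and
`H_{(m₁,…,m_k)} = U_{m_k}((1/(1-q)) · H_{(m₁,…,m_{k-1})})`. -/
noncomputable def Hser (l : List ℕ) : PowerSeries ℤ := HserRev l.reverse

/-- `μ(a,b) = a / gcd(a,b)`. -/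
def mu (a b : ℕ) : ℕ := a / Nat.gcd a b

/-!
Write `P_k = m₁ m₂² ⋯ m_k^k` and `μ_J = ∏_{t ∈ {1,…,k} \ J} μ(m_t, t)`; call a series admissible at
level `k` if it lies in the `ℤ`-span of the `μ_J · H_J` with `∅ ≠ J ⊆ {1, …, k}`.
The key computation is `U_m(h_k) = m^k h_k + μ(m, k) · (ℤ-combination of h₁, …, h_{k-1})`:
the coefficients of `U_m(h_k)` are `C(mn + k - 1, k)`, all divisible by `μ(m, k)`, and Newton's
forward difference formula expands them in the basis `q^j / (1 - q)^(j+1)`, which is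
unitriangular over `ℤ` with respect to the `h_s`.
By induction on `k`, `P_k h_k - H_{(m₁,…,m_k)}` is admissible using only proper subsets `J`, and
every `P_k h_s` with `1 ≤ s ≤ k` is admissible. In the step, `f ↦ U_{m_{k+1}}(f / (1 - q))` sends
`μ_J H_J` to `μ_{J ∪ {k+1}} H_{J ∪ {k+1}}`, and multiplication by `μ(m_{k+1}, k + 1)` carries
admissible series from level `k` to level `k + 1`.
-/

open PowerSeries Finset Submodule fwdDiff
open scoped Pointwise

lemma Nat.div_gcd_dvd_of_dvd_mul {a b c : ℕ} (hb : 0 < b) (h : a ∣ c * b) : a / a.gcd b ∣ c := by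
  have hg : 0 < a.gcd b := Nat.gcd_pos_of_pos_right a hb
  refine (Nat.Coprime.dvd_mul_right (Nat.coprime_div_gcd_div_gcd hg)).1 ?_
  rw [← Nat.mul_div_assoc c (Nat.gcd_dvd_right a b)]
  exact Nat.div_dvd_div (Nat.gcd_dvd_left a b) h

lemma Submodule.smul_mem_pointwise_smul_of_dvd {R M : Type*} [CommSemiring R] [AddCommMonoid M]
    [Module R M] {a b : R} (hab : a ∣ b) {p : Submodule R M} {x : M} (hx : x ∈ p) :
    b • x ∈ a • p := by
  obtain ⟨c, rfl⟩ := hab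
  rw [mul_smul]
  exact smul_mem_pointwise_smul _ _ _ (p.smul_mem c hx)

lemma Finset.sort_insert_of_forall_lt {α : Type*} [LinearOrder α] {s : Finset α} {a : α}
    (h : ∀ b ∈ s, b < a) : (insert a s).sort (· ≤ ·) = s.sort (· ≤ ·) ++ [a] := by
  have hl : (s.sort (· ≤ ·) ++ [a]).Pairwise (· < ·) :=
    List.pairwise_append.2 ⟨s.sortedLT_sort.pairwise, List.pairwise_singleton _ _,
      fun b hb c hc => List.mem_singleton.1 hc ▸ h b ((mem_sort _).1 hb)⟩
  convert (List.toFinset_sort (· ≤ ·) hl.nodup).2 (hl.imp le_of_lt) using 2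
  ext; simp

lemma fwdDiff_comp_mul_add {G : Type*} [AddCommGroup G] (f : ℕ → G) (m c : ℕ) :
    Δ_[1] (fun n => f (m * n + c)) = fun n => ∑ t ∈ range m, Δ_[1] f (m * n + c + t) := by
  funext n
  simp only [fwdDiff]
  rw [show m * (n + 1) + c = m * n + c + m by ring]
  exact (sum_range_sub (fun t => f (m * n + c + t)) m).symm

lemma fwdDiff_iter_choose_mul_add (m j c : ℕ) :
    Δ_[1] ^[j] (fun n => ((m * n + c).choose j : ℤ)) = fun _ => (m : ℤ) ^ j := by
  induction j generalizing c with
  | zero => simp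
  | succ j ih =>
    have hΔ : Δ_[1] (fun n => ((m * n + c).choose (j + 1) : ℤ))
        = ∑ t ∈ range m, fun n => ((m * n + (c + t)).choose j : ℤ) := by
      rw [fwdDiff_comp_mul_add (fun x => (x.choose (j + 1) : ℤ)), fwdDiff_choose]
      funext n
      simp [add_assoc]
    rw [Function.iterate_succ_apply, hΔ, fwdDiff_iter_finsetSum]
    simp only [ih, sum_const, card_range]
    funext n
    simp [pow_succ, mul_comm]

lemma PowerSeries.zsmul_eq_C_mul (a : ℤ) (f : ℤ⟦X⟧) : a • f = C a * f := by
  rw [zsmul_eq_mul, ← map_intCast (C (R := ℤ)), Int.cast_id]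

lemma invUnitsSub_one_eq_mk_one : invUnitsSub (1 : ℤˣ) = PowerSeries.mk 1 := by
  ext n; simp [coeff_invUnitsSub]

lemma coeff_invUnitsSub_one_pow (d n : ℕ) :
    coeff n (invUnitsSub (1 : ℤˣ) ^ (d + 1)) = (d + n).choose d := by
  rw [invUnitsSub_one_eq_mk_one, mk_one_pow_eq_mk_choose_add, coeff_mk]

lemma coeff_X_pow_mul_invUnitsSub_one_pow (j n : ℕ) :
    coeff n ((X : ℤ⟦X⟧) ^ j * invUnitsSub (1 : ℤˣ) ^ (j + 1)) = n.choose j := by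
  rw [coeff_X_pow_mul']
  split_ifs with hjn
  · rw [coeff_invUnitsSub_one_pow, Nat.add_sub_cancel' hjn]
  · rw [Nat.choose_eq_zero_of_lt (not_le.1 hjn), Nat.cast_zero]

lemma coeff_h_succ (k n : ℕ) : coeff n (h (k + 1)) = (n + k).choose (k + 1) := by
  cases n with
  | zero => simp [h]
  | succ n =>
    rw [h, coeff_succ_X_mul, coeff_invUnitsSub_one_pow]
    congr 2; omega

lemma invUnitsSub_one_mul_h (k : ℕ) : invUnitsSub (1 : ℤˣ) * h k = h (k + 1) := by
  simp only [h]; ring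

lemma X_mul_invUnitsSub_one : X * invUnitsSub (1 : ℤˣ) = invUnitsSub 1 - 1 := by
  simpa [mul_comm] using invUnitsSub_mul_X (1 : ℤˣ)

theorem mk_eq_sum_fwdDiff_iter (F : ℕ → ℤ) (N : ℕ) (hF : ∀ j, N < j → Δ_[1] ^[j] F 0 = 0) :
    PowerSeries.mk F =
      ∑ j ∈ range (N + 1), Δ_[1] ^[j] F 0 • (X ^ j * invUnitsSub (1 : ℤˣ) ^ (j + 1)) := by
  ext n
  simp only [coeff_mk, map_sum, zsmul_eq_C_mul, coeff_C_mul, coeff_X_pow_mul_invUnitsSub_one_pow]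
  calc F n = ∑ j ∈ range (n + 1), Δ_[1] ^[j] F 0 * n.choose j := by
        simpa [mul_comm] using shift_eq_sum_fwdDiff_iter 1 F n 0
    _ = ∑ j ∈ range (n + N + 1), Δ_[1] ^[j] F 0 * n.choose j := by
        refine sum_subset (range_subset_range.2 (by omega)) fun j _ hj => ?_
        rw [Nat.choose_eq_zero_of_lt (by simpa using hj), Nat.cast_zero, mul_zero]
    _ = ∑ j ∈ range (N + 1), Δ_[1] ^[j] F 0 * n.choose j := by
        refine (sum_subset (range_subset_range.2 (by omega)) fun j _ hj => ?_).symm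
        rw [hF j (by simpa using hj), zero_mul]

lemma mu_dvd_choose_mul_add (m k n : ℕ) : mu m (k + 1) ∣ (m * n + k).choose (k + 1) := by
  -- `C(N, k + 1) · (k + 1) = C(N, k) · (N - k)` with `N - k = m n`, so `m ∣ C(N, k + 1) · (k + 1)`.
  refine Nat.div_gcd_dvd_of_dvd_mul k.succ_pos ⟨n * (m * n + k).choose k, ?_⟩
  rw [Nat.choose_succ_right_eq, Nat.add_sub_cancel]
  ring

lemma mu_dvd_self (a b : ℕ) : mu a b ∣ a := Nat.div_dvd_of_dvd (Nat.gcd_dvd_left a b)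

lemma X_pow_mul_invUnitsSub_one_pow_sub_h_mem (j : ℕ) :
    (X : ℤ⟦X⟧) ^ (j + 1) * invUnitsSub (1 : ℤˣ) ^ (j + 1 + 1) - h (j + 1) ∈
      span ℤ (h '' Set.Icc 1 j) := by
  induction j with
  | zero => simp [h]
  | succ j ih =>
    -- Multiplying by `1 / (1 - q) - 1 = q / (1 - q)` raises the index on both sides, and it sends
    -- `h_s` to `h_{s+1} - h_s`.
    have hrec : (X : ℤ⟦X⟧) ^ (j + 1 + 1) * invUnitsSub (1 : ℤˣ) ^ (j + 1 + 1 + 1) - h (j + 1 + 1)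
        = (invUnitsSub 1 - 1) * (X ^ (j + 1) * invUnitsSub 1 ^ (j + 1 + 1) - h (j + 1))
          - h (j + 1) := by
      rw [← invUnitsSub_one_mul_h (j + 1)]
      linear_combination (X ^ (j + 1) * invUnitsSub 1 ^ (j + 1 + 1)) * X_mul_invUnitsSub_one
    rw [hrec]
    refine sub_mem ?_ (subset_span ⟨j + 1, ⟨by omega, le_rfl⟩, rfl⟩)
    refine (span_le (p := (span ℤ (h '' Set.Icc 1 (j + 1))).comap
      (LinearMap.mulLeft ℤ (invUnitsSub (1 : ℤˣ) - 1)))).2 ?_ ih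
    rintro _ ⟨s, hs, rfl⟩
    rw [SetLike.mem_coe, mem_comap, LinearMap.mulLeft_apply, sub_one_mul, invUnitsSub_one_mul_h]
    exact sub_mem (subset_span ⟨s + 1, ⟨by omega, by grind⟩, rfl⟩)
      (subset_span ⟨s, ⟨hs.1, by grind⟩, rfl⟩)

theorem U_h_succ_sub_mem (m k : ℕ) :
    U m (h (k + 1)) - (m : ℤ) ^ (k + 1) • h (k + 1) ∈
      (mu m (k + 1) : ℤ) • span ℤ (h '' Set.Icc 1 k) := by
  set F : ℕ → ℤ := fun n => ((m * n + k).choose (k + 1) : ℤ)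
  have hU : U m (h (k + 1)) = PowerSeries.mk F := by
    ext n; simp [U, coeff_h_succ, F]
  have hΔ : Δ_[1] ^[k + 1] F = fun _ => (m : ℤ) ^ (k + 1) :=
    fwdDiff_iter_choose_mul_add m (k + 1) k
  have hF_high : ∀ j, k + 1 < j → Δ_[1] ^[j] F 0 = 0 := by
    intro j hj
    obtain ⟨i, rfl⟩ := Nat.exists_eq_add_of_lt hj
    rw [show k + 1 + i + 1 = i + 1 + (k + 1) by omega, Function.iterate_add_apply, hΔ,
      Function.iterate_succ_apply, fwdDiff_const, Function.iterate_fixed (fwdDiff_const 1 0)]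
  have hF_dvd : ∀ j, (mu m (k + 1) : ℤ) ∣ Δ_[1] ^[j] F 0 := fun j => by
    rw [fwdDiff_iter_eq_sum_shift]
    exact dvd_sum fun i _ => by
      rw [smul_eq_mul]
      exact (Int.natCast_dvd_natCast.2 (mu_dvd_choose_mul_add m k _)).mul_left _
  have he : ∀ j ≤ k, (X : ℤ⟦X⟧) ^ (j + 1) * invUnitsSub (1 : ℤˣ) ^ (j + 1 + 1) - h (j + 1) ∈
      span ℤ (h '' Set.Icc 1 k) := fun j hj =>
    span_mono (Set.image_mono (Set.Icc_subset_Icc_right hj))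
      (X_pow_mul_invUnitsSub_one_pow_sub_h_mem j)
  rw [hU, mk_eq_sum_fwdDiff_iter F (k + 1) hF_high, sum_range_succ, sum_range_succ', hΔ]
  simp only [Function.iterate_zero, id_eq, F, mul_zero, zero_add, Nat.choose_succ_self,
    Nat.cast_zero, zero_smul, add_zero]
  rw [add_sub_assoc, ← smul_sub]
  refine add_mem (sum_mem fun j hj => smul_mem_pointwise_smul_of_dvd (hF_dvd _) ?_)
    (smul_mem_pointwise_smul_of_dvd ?_ (he k le_rfl))
  · have hjk : j < k := mem_range.1 hj
    simpa using add_mem (he j hjk.le) (subset_span ⟨j + 1, ⟨by omega, hjk⟩, rfl⟩)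
  · exact_mod_cast (mu_dvd_self m (k + 1)).trans (dvd_pow_self m k.succ_ne_zero)

noncomputable def Hstep (M : ℕ) : ℤ⟦X⟧ →ₗ[ℤ] ℤ⟦X⟧ where
  toFun f := U M (invUnitsSub 1 * f)
  map_add' f g := by ext n; simp [U, mul_add]
  map_smul' a f := by
    ext n
    rw [RingHom.id_apply, zsmul_eq_C_mul, zsmul_eq_C_mul, mul_left_comm]
    simp only [U, coeff_mk, coeff_C_mul]

lemma Hstep_apply (M : ℕ) (f : ℤ⟦X⟧) : Hstep M f = U M (invUnitsSub 1 * f) := rfl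

noncomputable def Hsub (m : ℕ → ℕ) (J : Finset ℕ) : ℤ⟦X⟧ := Hser ((J.sort (· ≤ ·)).map m)

lemma Hsub_insert_of_forall_lt (m : ℕ → ℕ) {J : Finset ℕ} {a : ℕ} (h : ∀ j ∈ J, j < a) :
    Hsub m (insert a J) = Hstep (m a) (Hsub m J) := by
  simp [Hsub, Hser, Hstep_apply, sort_insert_of_forall_lt h, HserRev]

lemma Hsub_Icc_succ (m : ℕ → ℕ) (k : ℕ) :
    Hsub m (Icc 1 (k + 1)) = Hstep (m (k + 1)) (Hsub m (Icc 1 k)) := by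
  rw [← insert_Icc_right_eq_Icc_add_one (by omega),
    Hsub_insert_of_forall_lt m fun j hj => Nat.lt_add_one_of_le (mem_Icc.1 hj).2]

def properSubsets (k : ℕ) : Finset (Finset ℕ) :=
  (Icc 1 k).powerset.filter (fun J => J.Nonempty ∧ J ≠ Icc 1 k)

def nonemptySubsets (k : ℕ) : Finset (Finset ℕ) :=
  (Icc 1 k).powerset.filter Finset.Nonempty

lemma properSubsets_subset_nonemptySubsets (k : ℕ) : properSubsets k ⊆ nonemptySubsets k :=
  monotone_filter_right _ fun _ _ => And.left

lemma insert_mem_properSubsets_succ {k : ℕ} {J : Finset ℕ} (hJ : J ∈ properSubsets k) :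
    insert (k + 1) J ∈ properSubsets (k + 1) := by
  simp only [properSubsets, mem_filter, mem_powerset] at hJ ⊢
  obtain ⟨hJk, -, hne⟩ := hJ
  refine ⟨?_, insert_nonempty _ _, fun heq => hne ?_⟩
  · rw [← insert_Icc_right_eq_Icc_add_one (by omega)]
    exact insert_subset_insert _ hJk
  · have hk : k + 1 ∉ J := fun h => by simpa using hJk h
    rw [← erase_insert hk, heq, ← insert_Icc_right_eq_Icc_add_one (by omega),
      erase_insert (by simp)]

lemma mem_properSubsets_succ {k : ℕ} {J : Finset ℕ} (hJ : J ∈ nonemptySubsets k) :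
    J ∈ properSubsets (k + 1) := by
  simp only [nonemptySubsets, properSubsets, mem_filter, mem_powerset] at hJ ⊢
  refine ⟨hJ.1.trans (Icc_subset_Icc_right k.le_succ), hJ.2, fun heq => ?_⟩
  simpa using hJ.1 (heq ▸ right_mem_Icc.2 (by omega) : k + 1 ∈ J)

lemma Icc_mem_nonemptySubsets {k : ℕ} (hk : 1 ≤ k) : Icc 1 k ∈ nonemptySubsets k := by
  simpa [nonemptySubsets] using hk

def muProd (m : ℕ → ℕ) (k : ℕ) (J : Finset ℕ) : ℕ := ∏ t ∈ Icc 1 k \ J, mu (m t) t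

lemma muProd_self (m : ℕ → ℕ) (k : ℕ) : muProd m k (Icc 1 k) = 1 := by
  simp [muProd]

lemma muProd_succ_insert (m : ℕ → ℕ) (k : ℕ) (J : Finset ℕ) :
    muProd m (k + 1) (insert (k + 1) J) = muProd m k J := by
  unfold muProd
  congr 1
  ext x
  simp only [mem_sdiff, mem_Icc, mem_insert]
  grind

lemma muProd_succ_of_subset (m : ℕ → ℕ) {k : ℕ} {J : Finset ℕ} (hJ : J ⊆ Icc 1 k) :
    muProd m (k + 1) J = mu (m (k + 1)) (k + 1) * muProd m k J := by
  have hk : k + 1 ∉ Icc 1 k \ J := by simp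
  have hsdiff : Icc 1 (k + 1) \ J = insert (k + 1) (Icc 1 k \ J) := by
    ext x
    have := @hJ x
    simp only [mem_sdiff, mem_Icc, mem_insert] at this ⊢
    grind
  rw [muProd, hsdiff, prod_insert hk, muProd]

noncomputable def weightedSpan (m : ℕ → ℕ) (k : ℕ) (S : Finset (Finset ℕ)) :
    Submodule ℤ ℤ⟦X⟧ :=
  span ℤ ((fun J => (muProd m k J : ℤ) • Hsub m J) '' S)

lemma weightedSpan_mono (m : ℕ → ℕ) (k : ℕ) {S T : Finset (Finset ℕ)} (h : S ⊆ T) :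
    weightedSpan m k S ≤ weightedSpan m k T :=
  span_mono (Set.image_mono (coe_subset.2 h))

lemma Hsub_Icc_mem_weightedSpan (m : ℕ → ℕ) {k : ℕ} (hk : 1 ≤ k) :
    Hsub m (Icc 1 k) ∈ weightedSpan m k (nonemptySubsets k) := by
  have := subset_span (R := ℤ)
    (Set.mem_image_of_mem (fun J => (muProd m k J : ℤ) • Hsub m J) (Icc_mem_nonemptySubsets hk))
  rwa [muProd_self, Nat.cast_one, one_smul] at this

lemma Hstep_mem_weightedSpan_succ (m : ℕ → ℕ) {k : ℕ} {x : ℤ⟦X⟧}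
    (hx : x ∈ weightedSpan m k (properSubsets k)) :
    Hstep (m (k + 1)) x ∈ weightedSpan m (k + 1) (properSubsets (k + 1)) := by
  refine (span_le (p := (weightedSpan m (k + 1) (properSubsets (k + 1))).comap
    (Hstep (m (k + 1))))).2 ?_ hx
  rintro _ ⟨J, hJ, rfl⟩
  have hlt : ∀ j ∈ J, j < k + 1 := fun j hj => by
    simp only [properSubsets, mem_coe, mem_filter, mem_powerset] at hJ
    exact Nat.lt_add_one_of_le (mem_Icc.1 (hJ.1 hj)).2
  rw [SetLike.mem_coe, mem_comap, map_zsmul, ← Hsub_insert_of_forall_lt m hlt,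
    ← muProd_succ_insert m k J]
  exact subset_span ⟨_, insert_mem_properSubsets_succ hJ, rfl⟩

lemma mu_smul_mem_weightedSpan_succ (m : ℕ → ℕ) {k : ℕ} {x : ℤ⟦X⟧}
    (hx : x ∈ weightedSpan m k (nonemptySubsets k)) :
    (mu (m (k + 1)) (k + 1) : ℤ) • x ∈ weightedSpan m (k + 1) (properSubsets (k + 1)) := by
  refine (span_le (p := (weightedSpan m (k + 1) (properSubsets (k + 1))).comap
    ((mu (m (k + 1)) (k + 1) : ℤ) • LinearMap.id (R := ℤ) (M := ℤ⟦X⟧)))).2 ?_ hx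
  rintro _ ⟨J, hJ, rfl⟩
  have hJk : J ⊆ Icc 1 k := by
    simp only [nonemptySubsets, mem_coe, mem_filter, mem_powerset] at hJ
    exact hJ.1
  rw [SetLike.mem_coe, mem_comap, LinearMap.smul_apply, LinearMap.id_apply, smul_smul,
    ← Nat.cast_mul, ← muProd_succ_of_subset m hJk]
  exact subset_span ⟨_, mem_properSubsets_succ hJ, rfl⟩

def powProd (m : ℕ → ℕ) (k : ℕ) : ℤ := ∏ t ∈ Icc 1 k, (m t : ℤ) ^ t

lemma powProd_succ (m : ℕ → ℕ) (k : ℕ) :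
    powProd m (k + 1) = powProd m k * (m (k + 1) : ℤ) ^ (k + 1) :=
  prod_Icc_succ_top (by omega) _

theorem powProd_smul_h_sub_Hsub_mem_succ {m : ℕ → ℕ} {k : ℕ}
    (hA : powProd m k • h k - Hsub m (Icc 1 k) ∈ weightedSpan m k (properSubsets k))
    (hB : ∀ s ∈ Set.Icc 1 k, powProd m k • h s ∈ weightedSpan m k (nonemptySubsets k)) :
    powProd m (k + 1) • h (k + 1) - Hsub m (Icc 1 (k + 1)) ∈
      weightedSpan m (k + 1) (properSubsets (k + 1)) := by
  obtain ⟨g, hg, hμg⟩ :=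
    (mem_smul_pointwise_iff_exists _ _ _).1 (U_h_succ_sub_mem (m (k + 1)) k)
  have hPg : powProd m k • g ∈ weightedSpan m k (nonemptySubsets k) :=
    (span_le (p := (weightedSpan m k (nonemptySubsets k)).comap
      (powProd m k • LinearMap.id (R := ℤ) (M := ℤ⟦X⟧)))).2
      (by rintro _ ⟨s, hs, rfl⟩; exact hB s hs) hg
  have key : powProd m (k + 1) • h (k + 1) - Hsub m (Icc 1 (k + 1)) =
      Hstep (m (k + 1)) (powProd m k • h k - Hsub m (Icc 1 k))
        - (mu (m (k + 1)) (k + 1) : ℤ) • powProd m k • g := by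
    rw [map_sub, map_zsmul, Hstep_apply _ (h k), invUnitsSub_one_mul_h, ← Hsub_Icc_succ,
      smul_comm _ (powProd m k), hμg, powProd_succ, mul_smul]
    module
  rw [key]
  exact sub_mem (Hstep_mem_weightedSpan_succ m hA) (mu_smul_mem_weightedSpan_succ m hPg)

theorem powProd_smul_h_mem_succ {m : ℕ → ℕ} {k : ℕ}
    (hA : powProd m (k + 1) • h (k + 1) - Hsub m (Icc 1 (k + 1)) ∈
      weightedSpan m (k + 1) (properSubsets (k + 1)))
    (hB : ∀ s ∈ Set.Icc 1 k, powProd m k • h s ∈ weightedSpan m k (nonemptySubsets k))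
    {s : ℕ} (hs : s ∈ Set.Icc 1 (k + 1)) :
    powProd m (k + 1) • h s ∈ weightedSpan m (k + 1) (nonemptySubsets (k + 1)) := by
  have hle := weightedSpan_mono m (k + 1) (properSubsets_subset_nonemptySubsets (k + 1))
  rcases hs.2.eq_or_lt with rfl | hlt
  · simpa using add_mem (hle hA) (Hsub_Icc_mem_weightedSpan m (Nat.le_add_left 1 k))
  · obtain ⟨c, hc⟩ : (mu (m (k + 1)) (k + 1) : ℤ) ∣ (m (k + 1) : ℤ) ^ (k + 1) := by
      exact_mod_cast (mu_dvd_self _ _).trans (dvd_pow_self _ k.succ_ne_zero)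
    have hsplit :
        powProd m (k + 1) • h s = c • (mu (m (k + 1)) (k + 1) : ℤ) • powProd m k • h s := by
      rw [powProd_succ, hc]; module
    rw [hsplit]
    exact Submodule.smul_mem _ _
      (hle (mu_smul_mem_weightedSpan_succ m (hB s ⟨hs.1, Nat.lt_add_one_iff.1 hlt⟩)))

theorem powProd_smul_h_sub_Hsub_mem (m : ℕ → ℕ) (k : ℕ) :
    powProd m k • h k - Hsub m (Icc 1 k) ∈ weightedSpan m k (properSubsets k) ∧
      ∀ s ∈ Set.Icc 1 k, powProd m k • h s ∈ weightedSpan m k (nonemptySubsets k) := by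
  induction k with
  | zero => simp [powProd, Hsub, Hser, HserRev, h]
  | succ k ih =>
    have hA := powProd_smul_h_sub_Hsub_mem_succ ih.1 ih.2
    exact ⟨hA, fun s hs => powProd_smul_h_mem_succ hA ih.2 hs⟩

theorem H_linear_combination_beta_dvd_general (r : ℕ) (m : ℕ → ℕ) :
    ∃ β : Finset ℕ → ℤ,
      (Hser (((Finset.Icc 1 r).sort (· ≤ ·)).map m) =
        PowerSeries.C (∏ t ∈ Finset.Icc 1 r, (m t : ℤ) ^ t) * h r -
          ∑ J ∈ (Finset.Icc 1 r).powerset.filter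
              (fun J => J.Nonempty ∧ J ≠ Finset.Icc 1 r),
            PowerSeries.C (β J) * Hser ((J.sort (· ≤ ·)).map m)) ∧
      ∀ J ∈ (Finset.Icc 1 r).powerset.filter
          (fun J => J.Nonempty ∧ J ≠ Finset.Icc 1 r),
        ((∏ t ∈ Finset.Icc 1 r \ J, mu (m t) t : ℕ) : ℤ) ∣ β J := by
  obtain ⟨c, hc⟩ := (Submodule.mem_span_image_finset_iff_exists_fun' ℤ).1
    (powProd_smul_h_sub_Hsub_mem m r).1
  refine ⟨fun J => c J * muProd m r J, ?_, fun J _ => dvd_mul_left _ _⟩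
  simp only [← zsmul_eq_C_mul, mul_smul]
  change Hsub m (Icc 1 r) = powProd m r • h r -
    ∑ J ∈ properSubsets r, c J • (muProd m r J : ℤ) • Hsub m J
  rw [hc, sub_sub_cancel]

/-- There exist integers `β_{(j₁,…,j_s)}` with
`H_{(m₁,…,m_r)} = m₁ m₂² ⋯ m_r^r · h_r - ∑ β_{(j₁,…,j_s)} · H_{(m_{j₁},…,m_{j_s})}`,
and each `β_{(j₁,…,j_s)}` is divisible by `∏_{t ∈ {1,…,r} \ {j₁,…,j_s}} μ(m_t, t)`. -/
theorem H_linear_combination_beta_dvd (r : ℕ) (hr : 1 ≤ r) (m : ℕ → ℕ)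
    (hm : ∀ j, 1 ≤ j → j ≤ r → 2 ≤ m j) :
    ∃ β : Finset ℕ → ℤ,
      (Hser (((Finset.Icc 1 r).sort (· ≤ ·)).map m) =
        PowerSeries.C (∏ t ∈ Finset.Icc 1 r, (m t : ℤ) ^ t) * h r -
          ∑ J ∈ (Finset.Icc 1 r).powerset.filter
              (fun J => J.Nonempty ∧ J ≠ Finset.Icc 1 r),
            PowerSeries.C (β J) * Hser ((J.sort (· ≤ ·)).map m)) ∧
      ∀ J ∈ (Finset.Icc 1 r).powerset.filter
          (fun J => J.Nonempty ∧ J ≠ Finset.Icc 1 r),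
        ((∏ t ∈ Finset.Icc 1 r \ J, mu (m t) t : ℕ) : ℤ) ∣ β J :=
  H_linear_combination_beta_dvd_general r m
end

section
/- Let M = (m_i)_{i=0}^∞ be a sequence of integers with m_0 = 1 and m_i ≥ 2 for all i ≥ 1, and let M' := (1, m_2, m_3, …) be the sequence with m_1 deleted. Then for every integer n ≥ 1: (1) p_M(m_1 n) − p_M(m_1 (n−1)) = p_{M'}(n), and (2) p_M(m_1 n − 1) = p_M(m_1 (n−1)). -/
/-!
If `m 0 = 1`, every `M`-part other than `1` is a multiple of `m 1`, so the number of ones in an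
`M`-ary partition of `N` is congruent to `N` modulo `m 1`. For `N = m₁ a + r` with `r < m₁` every
such partition therefore contains at least `r` ones, and removing them is a bijection onto the
`M`-ary partitions of `m₁ a`; this gives (2). For `N = m₁ (a + 1)`, a partition containing a one
contains at least `m₁` of them, and removing `m₁` ones again gives the partitions of `m₁ a`, while
dividing the parts of a partition without ones by `m₁` gives exactly the `M'`-ary partitions of
`a + 1`; this gives (1).
-/

open Finset

theorem Multiset.sum_mod_eq_count_one_mod {d : ℕ} {s : Multiset ℕ} (h : ∀ j ∈ s, j = 1 ∨ d ∣ j) :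
    s.sum % d = s.count 1 % d := by
  induction s using Multiset.induction_on with
  | empty => simp
  | cons a s ih =>
    have ih := ih fun j hj => h j (Multiset.mem_cons_of_mem hj)
    rcases eq_or_ne a 1 with rfl | ha
    · rw [Multiset.sum_cons, Multiset.count_cons_self, Nat.add_mod, ih, ← Nat.add_mod, add_comm]
    · obtain ⟨c, rfl⟩ := (h a (Multiset.mem_cons_self a s)).resolve_left ha
      rw [Multiset.sum_cons, Multiset.count_cons_of_ne ha.symm, add_comm,
        Nat.add_mul_mod_self_left, ih]

theorem Nat.card_subtype_eq_card_and_add_card_and_not {α : Type*} [Finite α] (P Q : α → Prop) :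
    Nat.card {x // P x} = Nat.card {x // P x ∧ Q x} + Nat.card {x // P x ∧ ¬Q x} := by
  classical
  rw [← Nat.card_sum]
  exact Nat.card_congr <| (Equiv.sumCompl fun x : {x // P x} => Q x).symm.trans <|
    Equiv.sumCongr (Equiv.subtypeSubtypeEquivSubtypeInter P Q)
      (Equiv.subtypeSubtypeEquivSubtypeInter P (¬Q ·))

namespace Nat.Partition

def removeOnesEquiv {P : ℕ → Prop} (hP : P 1) (N k : ℕ) :
    {p : (N + k).Partition // (∀ j ∈ p.parts, P j) ∧ k ≤ p.parts.count 1} ≃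
      {q : N.Partition // ∀ j ∈ q.parts, P j} where
  toFun p :=
    ⟨⟨p.1.parts - Multiset.replicate k 1,
      fun hi => p.1.parts_pos (Multiset.mem_of_le tsub_le_self hi), by
        have := congrArg Multiset.sum
          (tsub_add_cancel_of_le (Multiset.le_count_iff_replicate_le.1 p.2.2))
        rw [Multiset.sum_add, Multiset.sum_replicate, smul_eq_mul, mul_one, p.1.parts_sum] at this
        omega⟩,
      fun j hj => p.2.1 j (Multiset.mem_of_le tsub_le_self hj)⟩
  invFun q :=
    ⟨⟨Multiset.replicate k 1 + q.1.parts,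
      fun hi => by
        rcases Multiset.mem_add.1 hi with h | h
        · rw [Multiset.eq_of_mem_replicate h]; exact Nat.one_pos
        · exact q.1.parts_pos h, by
        rw [Multiset.sum_add, Multiset.sum_replicate, smul_eq_mul, mul_one, q.1.parts_sum,
          add_comm]⟩,
      fun j hj => by
        rcases Multiset.mem_add.1 hj with h | h
        · rw [Multiset.eq_of_mem_replicate h]; exact hP
        · exact q.2 j h, by
        rw [Multiset.count_add, Multiset.count_replicate_self]; omega⟩
  left_inv p := by
    ext1; ext1
    simpa [add_comm] using tsub_add_cancel_of_le (Multiset.le_count_iff_replicate_le.1 p.2.2)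
  right_inv q := by
    ext1; ext1
    simp

def divPartsEquiv {d : ℕ} (hd : 0 < d) (P : ℕ → Prop) (n : ℕ) :
    {p : (d * n).Partition // ∀ j ∈ p.parts, d ∣ j ∧ P j} ≃
      {q : n.Partition // ∀ k ∈ q.parts, P (d * k)} where
  toFun p :=
    ⟨⟨p.1.parts.map (· / d), fun hi => by
        obtain ⟨j, hj, rfl⟩ := Multiset.mem_map.1 hi
        exact Nat.div_pos (Nat.le_of_dvd (p.1.parts_pos hj) (p.2 j hj).1) hd, by
        refine Nat.eq_of_mul_eq_mul_left hd ?_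
        rw [← Multiset.sum_map_mul_left, Multiset.map_congr rfl fun j hj =>
          Nat.mul_div_cancel' (p.2 j hj).1, Multiset.map_id', p.1.parts_sum]⟩,
      fun k hk => by
        obtain ⟨j, hj, rfl⟩ := Multiset.mem_map.1 hk
        rw [Nat.mul_div_cancel' (p.2 j hj).1]
        exact (p.2 j hj).2⟩
  invFun q :=
    ⟨⟨q.1.parts.map (d * ·), fun hi => by
        obtain ⟨k, hk, rfl⟩ := Multiset.mem_map.1 hi
        exact Nat.mul_pos hd (q.1.parts_pos hk), by
        rw [Multiset.sum_map_mul_left, Multiset.map_id', q.1.parts_sum]⟩,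
      fun j hj => by
        obtain ⟨k, hk, rfl⟩ := Multiset.mem_map.1 hj
        exact ⟨dvd_mul_right d k, q.2 k hk⟩⟩
  left_inv p := by
    ext1; ext1
    simp only [Multiset.map_map, Function.comp_def]
    exact (Multiset.map_congr rfl fun j hj => Nat.mul_div_cancel' (p.2 j hj).1).trans
      (Multiset.map_id _)
  right_inv q := by
    ext1; ext1
    simp [Multiset.map_map, Nat.mul_div_cancel_left _ hd]

end Nat.Partition

/-- The sequence `M' = (1, m 2, m 3, …)`. -/
def dropM1 (m : ℕ → ℕ) : ℕ → ℕ := fun i => if i = 0 then 1 else m (i + 1)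

def IsMPart (m : ℕ → ℕ) (j : ℕ) : Prop := ∃ r : ℕ, j = ∏ i ∈ range (r + 1), m i

theorem pM_eq_card (m : ℕ → ℕ) (n : ℕ) :
    pM m n = Nat.card {p : n.Partition // ∀ j ∈ p.parts, IsMPart m j} := rfl

section

variable {m : ℕ → ℕ}

theorem prod_range_add_two_eq_mul_prod_dropM1 (hm0 : m 0 = 1) (r : ℕ) :
    ∏ i ∈ range (r + 2), m i = m 1 * ∏ i ∈ range (r + 1), dropM1 m i := by
  rw [prod_range_succ', prod_range_succ' (fun i => m (i + 1)), prod_range_succ']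
  simp [dropM1, hm0, mul_comm]

theorem isMPart_one (hm0 : m 0 = 1) : IsMPart m 1 := ⟨0, by simp [hm0]⟩

theorem IsMPart.eq_one_or_dvd (hm0 : m 0 = 1) {j : ℕ} (hj : IsMPart m j) : j = 1 ∨ m 1 ∣ j := by
  obtain ⟨_ | r, rfl⟩ := hj
  · simp [hm0]
  · rw [prod_range_add_two_eq_mul_prod_dropM1 hm0]
    exact Or.inr (dvd_mul_right _ _)

theorem isMPart_mul_iff (hm0 : m 0 = 1) (h1 : 0 < m 1) {k : ℕ} :
    IsMPart m (m 1 * k) ↔ IsMPart (dropM1 m) k := by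
  constructor
  · rintro ⟨_ | r, hr⟩
    · rw [prod_range_one, hm0, mul_eq_one] at hr
      exact hr.2 ▸ ⟨0, by simp [dropM1]⟩
    · rw [prod_range_add_two_eq_mul_prod_dropM1 hm0] at hr
      exact ⟨r, Nat.eq_of_mul_eq_mul_left h1 hr⟩
  · rintro ⟨r, rfl⟩
    exact ⟨r + 1, (prod_range_add_two_eq_mul_prod_dropM1 hm0 r).symm⟩

theorem count_one_mod_eq (hm0 : m 0 = 1) {N : ℕ} (p : N.Partition)
    (hp : ∀ j ∈ p.parts, IsMPart m j) :
    p.parts.count 1 % m 1 = N % m 1 := by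
  rw [← Multiset.sum_mod_eq_count_one_mod fun j hj => (hp j hj).eq_one_or_dvd hm0, p.parts_sum]

theorem pM_mul_add_of_lt (hm0 : m 0 = 1) {r : ℕ} (hr : r < m 1) (a : ℕ) :
    pM m (m 1 * a + r) = pM m (m 1 * a) := by
  rw [pM_eq_card, pM_eq_card]
  refine Nat.card_congr ((Equiv.subtypeEquivRight fun p => ?_).trans
    (Nat.Partition.removeOnesEquiv (isMPart_one hm0) _ r))
  refine ⟨fun hp => ⟨hp, ?_⟩, And.left⟩
  have hcount := count_one_mod_eq hm0 p hp
  rw [Nat.mul_add_mod, Nat.mod_eq_of_lt hr] at hcount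
  exact hcount.symm.trans_le (Nat.mod_le _ _)

theorem card_mul_succ_one_mem (hm0 : m 0 = 1) (hm1 : 0 < m 1) (a : ℕ) :
    Nat.card {p : (m 1 * (a + 1)).Partition // (∀ j ∈ p.parts, IsMPart m j) ∧ 1 ∈ p.parts} =
      pM m (m 1 * a) := by
  rw [mul_add_one, pM_eq_card]
  refine Nat.card_congr ((Equiv.subtypeEquivRight fun p => and_congr_right fun hp => ?_).trans
    (Nat.Partition.removeOnesEquiv (isMPart_one hm0) _ (m 1)))
  have hcount := count_one_mod_eq hm0 p hp
  rw [Nat.add_mod_right, Nat.mul_mod_right] at hcount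
  rw [← Multiset.count_pos]
  exact ⟨fun h => Nat.le_of_dvd h (Nat.dvd_of_mod_eq_zero hcount), fun h => by omega⟩

theorem card_mul_one_not_mem (hm0 : m 0 = 1) (hm1 : 2 ≤ m 1) (n : ℕ) :
    Nat.card {p : (m 1 * n).Partition // (∀ j ∈ p.parts, IsMPart m j) ∧ 1 ∉ p.parts} =
      pM (dropM1 m) n := by
  rw [pM_eq_card]
  refine Nat.card_congr ((Equiv.subtypeEquivRight fun p => ?_).trans <|
    (Nat.Partition.divPartsEquiv (by omega) (IsMPart m) n).trans <|
      Equiv.subtypeEquivRight fun q => forall₂_congr fun k _ => isMPart_mul_iff hm0 (by omega))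
  constructor
  · rintro ⟨hp, h1⟩ j hj
    exact ⟨((hp j hj).eq_one_or_dvd hm0).resolve_left (ne_of_mem_of_not_mem hj h1), hp j hj⟩
  · intro hp
    exact ⟨fun j hj => (hp j hj).2, fun h1 => by have := Nat.le_of_dvd one_pos (hp 1 h1).1; omega⟩

theorem pM_mul_succ (hm0 : m 0 = 1) (hm1 : 2 ≤ m 1) (a : ℕ) :
    pM m (m 1 * (a + 1)) = pM m (m 1 * a) + pM (dropM1 m) (a + 1) := by
  rw [pM_eq_card, Nat.card_subtype_eq_card_and_add_card_and_not _ (1 ∈ ·.parts),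
    card_mul_succ_one_mem hm0 (by omega), card_mul_one_not_mem hm0 hm1]

end

/-- For every `n ≥ 1`: `p_M(m₁ n) - p_M(m₁ (n-1)) = p_{M'}(n)` and
`p_M(m₁ n - 1) = p_M(m₁ (n-1))`, where `M' = (1, m₂, m₃, …)`. -/
theorem pM_shift_identities (m : ℕ → ℕ) (hm0 : m 0 = 1) (hm : ∀ i, 1 ≤ i → 2 ≤ m i)
    (n : ℕ) (hn : 1 ≤ n) :
    (pM m (m 1 * n) : ℤ) - (pM m (m 1 * (n - 1)) : ℤ) =
        (pM (fun i => if i = 0 then 1 else m (i + 1)) n : ℤ) ∧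
      pM m (m 1 * n - 1) = pM m (m 1 * (n - 1)) := by
  have hm1 : 2 ≤ m 1 := hm 1 le_rfl
  obtain ⟨a, rfl⟩ := Nat.exists_eq_add_of_le' hn
  rw [Nat.add_sub_cancel]
  refine ⟨?_, ?_⟩
  · rw [pM_mul_succ hm0 hm1]
    unfold dropM1
    push_cast
    ring
  · rw [show m 1 * (a + 1) - 1 = m 1 * a + (m 1 - 1) by rw [mul_add_one]; omega]
    exact pM_mul_add_of_lt hm0 (by omega) a
end

section
/- Let M = (m_i)_{i=0}^∞ be a sequence of integers with m_0 = 1 and m_i ≥ 2 for all i ≥ 1, and let M' := (1, m_2, m_3, …) be the sequence with m_1 deleted. Then in ℤ⟦q⟧: Σ_{n≥1} p_M(m_1 n − 1) q^n = (q/(1−q)) · F_{M'}(q). -/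
/-- Generating function of `pM`. -/
noncomputable def FM (m : ℕ → ℕ) : PowerSeries ℤ := PowerSeries.mk fun n => (pM m n : ℤ)

/-!
Since `m₀ = 1`, the parts of an `M`-ary partition are `1` and the numbers `m₁ · M'ᵣ`. Deleting
the ones and dividing the remaining parts by `m₁ ≥ 2` matches the `M`-ary partitions of
`m₁ (n + 1) - 1` with the `M'`-ary partitions of the numbers `k ≤ n`, the number of ones
`m₁ (n + 1) - 1 - m₁ k` being forced. Hence `p_M (m₁ (n + 1) - 1) = ∑_{k ≤ n} p_{M'} k`, which is
the coefficient of `q^(n + 1)` in `q / (1 - q) · F_{M'}(q)`.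
-/

open Finset

theorem PowerSeries.coeff_invUnitsSub_one_mul {R : Type*} [Ring R] (f : PowerSeries R) (n : ℕ) :
    coeff n (invUnitsSub (1 : Rˣ) * f) = ∑ j ∈ range (n + 1), coeff j f := by
  rw [coeff_mul, Nat.sum_antidiagonal_eq_sum_range_succ (fun i j => coeff i _ * coeff j f),
    ← sum_range_reflect]
  refine sum_congr rfl fun j hj => ?_
  rw [Nat.succ_sub_one, Nat.sub_sub_self (Nat.le_of_lt_succ (mem_range.1 hj))]
  simp

theorem Fin.mul_val_le_of_div_add_one {d n : ℕ} (hd : 0 < d) (k : Fin (n / d + 1)) :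
    d * k ≤ n := by
  rw [mul_comm, ← Nat.le_div_iff_mul_le hd]
  exact Nat.lt_succ_iff.1 k.isLt

theorem Nat.Partition.one_notMem_map_mul {d k : ℕ} (hd : 2 ≤ d) (q : k.Partition) :
    1 ∉ q.parts.map (d * ·) := by
  intro h
  obtain ⟨s, hs, hds⟩ := Multiset.mem_map.1 h
  have := q.parts_pos hs
  nlinarith

abbrev RestrictedPartition (P : ℕ → Prop) (n : ℕ) : Type :=
  {p : n.Partition // ∀ j ∈ p.parts, P j}

namespace RestrictedPartition

variable {d n : ℕ} {P : ℕ → Prop}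

def padWithOnes (hd : 2 ≤ d) (q : Σ k : Fin (n / d + 1), RestrictedPartition P k) :
    RestrictedPartition (fun j => j = 1 ∨ ∃ s, P s ∧ j = d * s) n where
  val :=
    { parts := Multiset.replicate (n - d * q.1) 1 + q.2.1.parts.map (d * ·)
      parts_pos := by
        intro i hi
        rcases Multiset.mem_add.1 hi with h | h
        · rw [Multiset.eq_of_mem_replicate h]
          exact one_pos
        · obtain ⟨s, hs, rfl⟩ := Multiset.mem_map.1 h
          exact Nat.mul_pos (by omega) (q.2.1.parts_pos hs)
      parts_sum := by
        rw [Multiset.sum_add, Multiset.sum_replicate, smul_eq_mul, mul_one,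
          Multiset.sum_map_mul_left, Multiset.map_id', q.2.1.parts_sum]
        exact Nat.sub_add_cancel (Fin.mul_val_le_of_div_add_one (by omega) q.1) }
  property := by
    intro j hj
    rcases Multiset.mem_add.1 hj with h | h
    · exact Or.inl (Multiset.eq_of_mem_replicate h)
    · obtain ⟨s, hs, rfl⟩ := Multiset.mem_map.1 h
      exact Or.inr ⟨s, q.2.2 s hs, rfl⟩

theorem padWithOnes_injective (hd : 2 ≤ d) :
    Function.Injective (padWithOnes (P := P) (n := n) hd) := by
  rintro ⟨k₁, q₁⟩ ⟨k₂, q₂⟩ h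
  have hparts := congrArg (·.1.parts) h
  simp only [padWithOnes] at hparts
  have hones := congrArg (Multiset.count 1) hparts
  simp only [Multiset.count_add, Multiset.count_replicate_self,
    Multiset.count_eq_zero.2 (Nat.Partition.one_notMem_map_mul hd _), add_zero] at hones
  have hk : k₁ = k₂ := by
    have h₁ := Fin.mul_val_le_of_div_add_one (by omega) k₁
    have h₂ := Fin.mul_val_le_of_div_add_one (by omega) k₂
    have : d * (k₁ : ℕ) = d * k₂ := by omega
    exact Fin.ext (Nat.eq_of_mul_eq_mul_left (by omega) this)
  subst hk
  rw [hones, add_right_inj] at hparts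
  have hq : q₁ = q₂ := Subtype.ext (Nat.Partition.ext
    (Multiset.map_injective (fun _ _ => Nat.eq_of_mul_eq_mul_left (by omega)) hparts))
  rw [hq]

theorem padWithOnes_surjective (hd : 2 ≤ d) :
    Function.Surjective (padWithOnes (P := P) (n := n) hd) := by
  rintro ⟨p, hp⟩
  set big := p.parts.filter (· ≠ 1)
  have hbig : ∀ x ∈ big, d * (x / d) = x ∧ P (x / d) := fun x hx => by
    obtain ⟨s, hs, rfl⟩ :=
      (hp x (Multiset.mem_filter.1 hx).1).resolve_left (Multiset.mem_filter.1 hx).2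
    rw [Nat.mul_div_cancel_left s (by omega)]
    exact ⟨rfl, hs⟩
  set q := big.map (· / d)
  have hq : q.map (d * ·) = big := by
    rw [Multiset.map_map]
    exact (Multiset.map_congr rfl fun x hx => (hbig x hx).1).trans (Multiset.map_id' big)
  have hq_pos : ∀ i ∈ q, 0 < i := Multiset.forall_mem_map_iff.2 fun x hx =>
    Nat.pos_of_mul_pos_left ((hbig x hx).1 ▸ p.parts_pos (Multiset.mem_filter.1 hx).1)
  have hq_P : ∀ i ∈ q, P i := Multiset.forall_mem_map_iff.2 fun x hx => (hbig x hx).2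
  have hsplit : Multiset.replicate (p.parts.count 1) 1 + big = p.parts := by
    rw [← Multiset.filter_eq']
    exact Multiset.filter_add_not _ _
  have hsum : p.parts.count 1 + d * q.sum = n := by
    have := p.parts_sum
    rwa [← hsplit, Multiset.sum_add, Multiset.sum_replicate, smul_eq_mul, mul_one, ← hq,
      Multiset.sum_map_mul_left, Multiset.map_id'] at this
  have hk : q.sum < n / d + 1 := by
    rw [Nat.lt_succ_iff, Nat.le_div_iff_mul_le (by omega)]
    linarith
  refine ⟨⟨⟨q.sum, hk⟩, ⟨⟨q, fun hi => hq_pos _ hi, rfl⟩, hq_P⟩⟩,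
    Subtype.ext (Nat.Partition.ext ?_)⟩
  change Multiset.replicate (n - d * q.sum) 1 + q.map (d * ·) = p.parts
  rw [hq, ← hsplit]
  congr 2
  omega

theorem card_one_or_mul_eq_sum (hd : 2 ≤ d) (P : ℕ → Prop) (n : ℕ) :
    Nat.card (RestrictedPartition (fun j => j = 1 ∨ ∃ s, P s ∧ j = d * s) n) =
      ∑ k ∈ range (n / d + 1), Nat.card (RestrictedPartition P k) := by
  rw [← Nat.card_congr (Equiv.ofBijective _
      ⟨padWithOnes_injective hd, padWithOnes_surjective hd⟩),
    Nat.card_sigma, Fin.sum_univ_eq_sum_range (fun k => Nat.card (RestrictedPartition P k))]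

end RestrictedPartition

theorem prod_range_succ_succ_of_zero_eq_one {m : ℕ → ℕ} (hm0 : m 0 = 1) (r : ℕ) :
    ∏ i ∈ range (r + 2), m i = m 1 * ∏ i ∈ range (r + 1), if i = 0 then 1 else m (i + 1) := by
  simp [prod_range_succ', hm0, mul_comm]

theorem exists_prod_range_eq_iff {m : ℕ → ℕ} (hm0 : m 0 = 1) (j : ℕ) :
    (∃ r, j = ∏ i ∈ range (r + 1), m i) ↔
      j = 1 ∨ ∃ s, (∃ r, s = ∏ i ∈ range (r + 1), if i = 0 then 1 else m (i + 1)) ∧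
        j = m 1 * s := by
  constructor
  · rintro ⟨_ | r, rfl⟩
    · simp [hm0]
    · exact Or.inr ⟨_, ⟨r, rfl⟩, prod_range_succ_succ_of_zero_eq_one hm0 r⟩
  · rintro (rfl | ⟨s, ⟨r, rfl⟩, rfl⟩)
    · exact ⟨0, by simp [hm0]⟩
    · exact ⟨r + 1, (prod_range_succ_succ_of_zero_eq_one hm0 r).symm⟩

theorem pM_mul_succ_sub_one {m : ℕ → ℕ} (hm0 : m 0 = 1) (hm1 : 2 ≤ m 1) (n : ℕ) :
    pM m (m 1 * (n + 1) - 1) =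
      ∑ k ∈ range (n + 1), pM (fun i => if i = 0 then 1 else m (i + 1)) k := by
  have hdiv : (m 1 * (n + 1) - 1) / m 1 = n := by
    rw [Nat.div_eq_iff (by omega), mul_add_one, mul_comm n]
    omega
  show Nat.card (RestrictedPartition (fun j => ∃ r, j = ∏ i ∈ range (r + 1), m i) _) = _
  simp_rw [exists_prod_range_eq_iff hm0]
  rw [RestrictedPartition.card_one_or_mul_eq_sum hm1, hdiv]
  rfl

/-- `∑_{n≥1} p_M(m₁ n - 1) qⁿ = (q/(1-q)) · F_{M'}(q)`, where `M' = (1, m₂, m₃, …)`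
and `invUnitsSub 1` is the inverse of `1 - q` in `ℤ⟦q⟧`. -/
theorem genFun_m1_eq (m : ℕ → ℕ) (hm0 : m 0 = 1) (hm : ∀ i, 1 ≤ i → 2 ≤ m i) :
    (PowerSeries.mk fun n => if n = 0 then 0 else (pM m (m 1 * n - 1) : ℤ)) =
      PowerSeries.X * PowerSeries.invUnitsSub (1 : ℤˣ) *
        FM (fun i => if i = 0 then 1 else m (i + 1)) := by
  ext (_ | n)
  · simp
  · rw [mul_assoc, PowerSeries.coeff_succ_X_mul, PowerSeries.coeff_invUnitsSub_one_mul,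
      PowerSeries.coeff_mk, if_neg n.succ_ne_zero, pM_mul_succ_sub_one hm0 (hm 1 le_rfl)]
    simp [FM]
end
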